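/- arXiv:1903.09026 — 12 statements merged into one kernel-verified Lean document; each statement's English description precedes it below -/
import Mathlib

section
/- Let Δ be a simplicial complex on {1,...,r}, and let p ≥ 1, m_1,...,m_p ≥ 0 be integers and x^{α_j} ∈ I_Δ^(m_j) monomials for j = 1,...,p. If x^{α_1 + ... + α_p} is a minimal generator of I_Δ^(m_1 + ... + m_p), then for all integers n_1,...,n_p ≥ 0 the monomial x^{n_1 α_1 + ... + n_p α_p} is a minimal generator of I_Δ^(m_1 n_1 + ... + m_p n_p). -/
/-- Membership of the monomial `x^α` in the `n`-th symbolic power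
`I_Δ^(n) = ⋂_{F facet} P_F^n`: it holds iff `∑_{j ∉ F} α j ≥ n` for all facets. -/
def memSymbSR {r : ℕ} (ℱ : Finset (Finset (Fin r))) (n : ℕ) (α : Fin r → ℕ) : Prop :=
  ∀ F ∈ ℱ, n ≤ ∑ j ∈ Fᶜ, α j

/-- `x^α` is a minimal monomial generator of `I_Δ^(n)`. -/
def isMinGenSymbSR {r : ℕ} (ℱ : Finset (Finset (Fin r))) (n : ℕ) (α : Fin r → ℕ) : Prop :=
  memSymbSR ℱ n α ∧ ∀ β : Fin r → ℕ, β ≤ α → β ≠ α → ¬ memSymbSR ℱ n β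

/-- if `x^{α 1 + ⋯ + α p}` with `x^{α j} ∈ I_Δ^(m j)` is a minimal
generator of `I_Δ^(m 1 + ⋯ + m p)`, then `x^{n 1 • α 1 + ⋯ + n p • α p}` is a
minimal generator of `I_Δ^(m 1 * n 1 + ⋯ + m p * n p)` for all `n j ≥ 0`.
Here `ℱ` is the facet set of the simplicial complex `Δ` on `{1,…,r}`. -/
theorem minGen_of_sum_implies_minGen_of_combination
    {r : ℕ} (ℱ : Finset (Finset (Fin r))) (hℱ : ℱ.Nonempty)
    (hfacets : ∀ F ∈ ℱ, ∀ G ∈ ℱ, F ⊆ G → F = G)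
    (p : ℕ) (hp : 1 ≤ p) (m : Fin p → ℕ) (α : Fin p → Fin r → ℕ)
    (hmem : ∀ j, memSymbSR ℱ (m j) (α j))
    (hgen : isMinGenSymbSR ℱ (∑ j, m j) (∑ j, α j)) :
    ∀ n : Fin p → ℕ,
      isMinGenSymbSR ℱ (∑ j, m j * n j) (∑ j, n j • α j) := by
  intro n
  -- helper: swap sums
  have hswap : ∀ (F : Finset (Fin r)) (c : Fin p → ℕ),
      ∑ j ∈ Fᶜ, (∑ k, c k • α k) j = ∑ k, c k * ∑ j ∈ Fᶜ, α k j := by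
    intro F c
    simp only [Finset.sum_apply, Pi.smul_apply, smul_eq_mul, Finset.mul_sum]
    exact Finset.sum_comm
  have hswap1 : ∀ (F : Finset (Fin r)),
      ∑ j ∈ Fᶜ, (∑ k, α k) j = ∑ k, ∑ j ∈ Fᶜ, α k j := by
    intro F
    simp only [Finset.sum_apply]
    exact Finset.sum_comm
  constructor
  · intro F hF
    rw [hswap]
    exact Finset.sum_le_sum fun k _ => by
      rw [mul_comm]
      exact Nat.mul_le_mul_left (n k) (hmem k F hF)
  · intro β hβ hne hmemβ
    -- find i with β i < (∑ n k • α k) i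
    obtain ⟨i, hi⟩ : ∃ i, β i < (∑ k, n k • α k) i := by
      by_contra h
      push_neg at h
      exact hne (le_antisymm hβ h)
    -- then (∑ α k) i ≥ 1
    have hαi : 0 < (∑ k, α k) i := by
      by_contra h
      push_neg at h
      have : (∑ k, n k • α k) i = 0 := by
        simp only [Finset.sum_apply, Pi.smul_apply, smul_eq_mul] at h ⊢
        simp only [Nat.le_zero, Finset.sum_eq_zero_iff] at h
        exact Finset.sum_eq_zero fun k hk => by rw [h k hk, mul_zero]
      omega
    -- minimality of ∑ α at i : get facet F with i ∉ F and equality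
    set γ : Fin r → ℕ := fun j => if j = i then (∑ k, α k) j - 1 else (∑ k, α k) j with hγ
    have hγle : γ ≤ ∑ k, α k := by
      intro j; by_cases h : j = i <;> simp [hγ, h]
    have hγne : γ ≠ ∑ k, α k := by
      intro h
      have := congrFun h i
      simp only [hγ, if_pos rfl] at this
      omega
    have := hgen.2 γ hγle hγne
    rw [memSymbSR] at this
    push_neg at this
    obtain ⟨F, hF, hFlt⟩ := this
    have hiF : i ∈ Fᶜ := by
      by_contra h
      have : ∑ j ∈ Fᶜ, γ j = ∑ j ∈ Fᶜ, (∑ k, α k) j := by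
        refine Finset.sum_congr rfl fun j hj => ?_
        have : j ≠ i := fun e => h (e ▸ hj)
        simp [hγ, this]
      rw [this] at hFlt
      exact absurd (hgen.1 F hF) (not_le.mpr hFlt)
    -- equality at F
    have hsum : ∑ j ∈ Fᶜ, γ j = (∑ j ∈ Fᶜ, (∑ k, α k) j) - 1 := by
      have e1 := Finset.sum_erase_add Fᶜ γ hiF
      have e2 := Finset.sum_erase_add Fᶜ (∑ k, α k) hiF
      have h1 : ∑ j ∈ Fᶜ.erase i, γ j = ∑ j ∈ Fᶜ.erase i, (∑ k, α k) j := by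
        refine Finset.sum_congr rfl fun j hj => ?_
        have := Finset.ne_of_mem_erase hj
        simp [hγ, this]
      have h2 : γ i = (∑ k, α k) i - 1 := by simp [hγ]
      omega
    have heq : ∑ j ∈ Fᶜ, (∑ k, α k) j = ∑ k, m k := by
      have := hgen.1 F hF
      omega
    -- each term equality
    have hterm : ∀ k : Fin p, m k = ∑ j ∈ Fᶜ, α k j := by
      rw [hswap1] at heq
      have hle : ∀ k ∈ Finset.univ (α := Fin p), m k ≤ ∑ j ∈ Fᶜ, α k j :=
        fun k _ => hmem k F hF
      intro k
      exact (Finset.sum_eq_sum_iff_of_le hle).mp heq.symm k (Finset.mem_univ k)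
    -- now β fails at F
    apply absurd (hmemβ F hF)
    push_neg
    calc ∑ j ∈ Fᶜ, β j < ∑ j ∈ Fᶜ, (∑ k, n k • α k) j := by
          apply Finset.sum_lt_sum (fun j _ => hβ j) ⟨i, hiF, hi⟩
      _ = ∑ k, m k * n k := by
          rw [hswap]
          exact Finset.sum_congr rfl fun k _ => by rw [← hterm k, mul_comm]
end

section
/- Let Δ be a simplicial complex on {1,...,r} and x^α a minimal generator of I_Δ. Then for all n ≥ 1, the monomial x^{nα} is a minimal generator of I_Δ^(n). -/
/-- if `x^α` is a minimal monomial generator of the Stanley–Reisner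
ideal `I_Δ`, then `x^{nα}` is a minimal monomial generator of `I_Δ^(n)` for all
`n ≥ 1`. Here `ℱ` is the facet set of the simplicial complex `Δ` on `{1,…,r}`. -/
theorem minGen_pow_of_minGen
    {r : ℕ} (ℱ : Finset (Finset (Fin r))) (hℱ : ℱ.Nonempty)
    (hfacets : ∀ F ∈ ℱ, ∀ G ∈ ℱ, F ⊆ G → F = G)
    (α : Fin r → ℕ) (hgen : isMinGenSymbSR ℱ 1 α) :
    ∀ n : ℕ, 1 ≤ n → isMinGenSymbSR ℱ n (n • α) := by
  obtain ⟨hmem, hmin⟩ := hgen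
  intro n hn
  constructor
  · intro F hF
    have h1 := hmem F hF
    have : ∑ j ∈ Fᶜ, (n • α) j = n * ∑ j ∈ Fᶜ, α j := by
      simp [Finset.mul_sum]
    rw [this]
    calc n = n * 1 := (mul_one n).symm
      _ ≤ n * ∑ j ∈ Fᶜ, α j := Nat.mul_le_mul_left n h1
  · intro β hβle hβne hβmem
    -- find a coordinate where β is strictly smaller
    have hex : ∃ i, β i < n * α i := by
      by_contra h
      push_neg at h
      exact hβne (funext fun i => le_antisymm (hβle i) (h i))
    obtain ⟨i, hi⟩ := hex
    have hαi : 1 ≤ α i := by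
      rcases Nat.eq_zero_or_pos (α i) with h | h
      · simp [h] at hi
      · exact h
    -- decrease α at i by one
    set β' : Fin r → ℕ := Function.update α i (α i - 1) with hβ'
    have hβ'le : β' ≤ α := by
      intro j
      by_cases h : j = i
      · subst h; simp [hβ', Nat.sub_le]
      · simp [hβ', Function.update_of_ne h]
    have hβ'ne : β' ≠ α := by
      intro h
      have := congrFun h i
      simp [hβ'] at this
      omega
    have hnmem := hmin β' hβ'le hβ'ne
    unfold memSymbSR at hnmem
    push_neg at hnmem
    obtain ⟨G, hG, hGsum⟩ := hnmem
    have hGzero : ∀ j ∈ Gᶜ, β' j = 0 := by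
      intro j hj
      have : ∑ j ∈ Gᶜ, β' j = 0 := by omega
      exact (Finset.sum_eq_zero_iff.mp this) j hj
    -- the facet G witnesses
    have h1G := hmem G hG
    obtain ⟨j, hjG, hjne⟩ := Finset.exists_ne_zero_of_sum_ne_zero (by omega :
      ∑ j ∈ Gᶜ, α j ≠ 0)
    have hji : j = i := by
      by_contra h
      have := hGzero j hjG
      rw [hβ', Function.update_of_ne h] at this
      exact hjne this
    subst hji
    have hαj1 : α j = 1 := by
      have := hGzero j hjG
      simp [hβ'] at this
      omega
    -- all other coordinates of α vanish on Gᶜ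
    have hzero : ∀ k ∈ Gᶜ, k ≠ j → α k = 0 := by
      intro k hk hkj
      have := hGzero k hk
      rwa [hβ', Function.update_of_ne hkj] at this
    have hsum : ∑ k ∈ Gᶜ, β k = β j := by
      apply Finset.sum_eq_single_of_mem j hjG
      intro k hk hkj
      have h1 : β k ≤ n * α k := hβle k
      rw [hzero k hk hkj, mul_zero] at h1
      omega
    have := hβmem G hG
    rw [hsum] at this
    rw [hαj1, mul_one] at hi
    omega
end

section
/- Let Δ be a simplicial complex on {1,...,r}. Then for all n ≥ 1, the maximal degree of a minimal monomial generator of I_Δ^(n) satisfies d(I_Δ^(n)) ≤ δ(I_Δ) · n, where δ(I_Δ) = max{|v| : v is a vertex of SP(Δ)} and SP(Δ) is the polyhedron {x ∈ ℝ^r : ∑_{i ∉ F} x_i ≥ 1 for all facets F of Δ, x_i ≥ 0 for all i}. -/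
/-- The polyhedron `SP(Δ) = {x ∈ ℝ^r : ∑_{i ∉ F} x i ≥ 1 for all facets F, x ≥ 0}`. -/
def SPcomplex {r : ℕ} (ℱ : Finset (Finset (Fin r))) : Set (Fin r → ℝ) :=
  {x | (∀ F ∈ ℱ, 1 ≤ ∑ i ∈ Fᶜ, x i) ∧ ∀ i, 0 ≤ x i}

/-!
Let `x^α` be a minimal generator of `I_Δ^(n)`. Then `α / n ∈ SP(Δ)`, and minimality makes every
variable of the support of `α` occur in a facet constraint that is tight at `α / n`. Hence the face
of `SP(Δ)` cut out by the constraints tight at `α / n` is bounded, so compact. The linear form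
`|·|` attains its maximum over that face at one of its extreme points (Krein–Milman), which is a
vertex of `SP(Δ)`; therefore `|α| / n ≤ δ`.
-/

theorem LinearMap.eq_of_mem_openSegment_of_le {𝕜 E : Type*} [Field 𝕜] [LinearOrder 𝕜]
    [IsStrictOrderedRing 𝕜] [AddCommGroup E] [Module 𝕜 E] (f : E →ₗ[𝕜] 𝕜) {x x₁ x₂ : E} {c : 𝕜}
    (hx : x ∈ openSegment 𝕜 x₁ x₂) (h₁ : c ≤ f x₁) (h₂ : c ≤ f x₂) (h : f x = c) :
    f x₁ = c := by
  obtain ⟨a, b, ha, hb, hab, rfl⟩ := hx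
  rw [map_add, map_smul, map_smul, smul_eq_mul, smul_eq_mul] at h
  have hsum : a * (f x₁ - c) + b * (f x₂ - c) = 0 := by linear_combination h - c * hab
  have hzero := ((add_eq_zero_iff_of_nonneg (mul_nonneg ha.le (sub_nonneg.2 h₁))
    (mul_nonneg hb.le (sub_nonneg.2 h₂))).1 hsum).1
  simpa [ha.ne', sub_eq_zero] using hzero

theorem IsCompact.exists_mem_extremePoints_le {E : Type*} [AddCommGroup E] [Module ℝ E]
    [TopologicalSpace E] [T2Space E] [IsTopologicalAddGroup E] [ContinuousSMul ℝ E]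
    [LocallyConvexSpace ℝ E] {s : Set E} (hs : IsCompact s) (l : StrongDual ℝ E) {x : E}
    (hx : x ∈ s) : ∃ e ∈ s.extremePoints ℝ, l x ≤ l e := by
  have hexp : IsExposed ℝ s (l.toExposed s) := ContinuousLinearMap.toExposed.isExposed
  obtain ⟨m, hm, hmax⟩ := hs.exists_isMaxOn ⟨x, hx⟩ l.continuous.continuousOn
  obtain ⟨e, he⟩ := (hexp.isCompact hs).extremePoints_nonempty ⟨m, hm, hmax⟩
  exact ⟨e, hexp.isExtreme.extremePoints_subset_extremePoints he, he.1.2 x hx⟩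

namespace isMinGenSymbSR

variable {r : ℕ} {ℱ : Finset (Finset (Fin r))} {n : ℕ} {α : Fin r → ℕ}

/-- Lowering the exponent of `x_i` by one leaves `I_Δ^(n)`, so some facet constraint through `i`
is tight. -/
theorem exists_tight_facet (hα : isMinGenSymbSR ℱ n α) {i : Fin r} (hi : α i ≠ 0) :
    ∃ F ∈ ℱ, i ∉ F ∧ ∑ j ∈ Fᶜ, α j = n := by
  classical
  set β := α - Pi.single i 1
  have hβα : β + Pi.single i 1 = α := by
    refine tsub_add_cancel_of_le fun j => ?_
    obtain rfl | hj := eq_or_ne j i <;> simp [*, Nat.one_le_iff_ne_zero]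
  have hβne : β ≠ α := fun h => by
    have hβi := congrFun h i
    simp only [β, Pi.sub_apply, Pi.single_eq_same] at hβi
    omega
  obtain ⟨F, hF, hβF⟩ : ∃ F ∈ ℱ, ∑ j ∈ Fᶜ, β j < n := by
    simpa [memSymbSR] using hα.2 β tsub_le_self hβne
  have hsum : ∑ j ∈ Fᶜ, α j = ∑ j ∈ Fᶜ, β j + if i ∈ Fᶜ then 1 else 0 := by
    rw [← hβα]
    simp only [Pi.add_apply, Finset.sum_add_distrib, Finset.sum_pi_single']
  have hαF := hα.1 F hF
  refine ⟨F, hF, ?_, ?_⟩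
  · intro hiF
    simp only [Finset.mem_compl, hiF, not_true_eq_false, if_false] at hsum
    omega
  · split_ifs at hsum <;> omega

end isMinGenSymbSR

theorem memSymbSR.div_mem_SPcomplex {r : ℕ} {ℱ : Finset (Finset (Fin r))} {n : ℕ}
    {α : Fin r → ℕ} (hα : memSymbSR ℱ n α) (hn : (0 : ℝ) < n) :
    (fun i => (α i : ℝ) / n) ∈ SPcomplex ℱ := by
  refine ⟨fun F hF => ?_, fun i => by positivity⟩
  rw [← Finset.sum_div, le_div_iff₀ hn, one_mul]
  exact_mod_cast hα F hF

namespace SPcomplex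

variable {r : ℕ} (ℱ : Finset (Finset (Fin r)))

/-- The smallest face of `SP(Δ)` containing `x`. -/
def tightFace (x : Fin r → ℝ) : Set (Fin r → ℝ) :=
  {y | y ∈ SPcomplex ℱ ∧ (∀ F ∈ ℱ, ∑ j ∈ Fᶜ, x j = 1 → ∑ j ∈ Fᶜ, y j = 1) ∧
    ∀ i, x i = 0 → y i = 0}

variable {ℱ}

theorem self_mem_tightFace {x : Fin r → ℝ} (hx : x ∈ SPcomplex ℱ) : x ∈ tightFace ℱ x :=
  ⟨hx, fun _ _ h => h, fun _ h => h⟩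

variable (ℱ) in
theorem isExtreme_tightFace (x : Fin r → ℝ) : IsExtreme ℝ (SPcomplex ℱ) (tightFace ℱ x) := by
  refine ⟨fun y hy => hy.1, ?_⟩
  rintro y₁ hy₁ y₂ hy₂ y ⟨-, hyF, hy0⟩ hseg
  refine ⟨hy₁, fun F hF hxF => ?_, fun i hi =>
    (LinearMap.proj i).eq_of_mem_openSegment_of_le hseg (hy₁.2 i) (hy₂.2 i) (hy0 i hi)⟩
  simpa using (∑ j ∈ Fᶜ, LinearMap.proj j).eq_of_mem_openSegment_of_le hseg
    (by simpa using hy₁.1 F hF) (by simpa using hy₂.1 F hF) (by simpa using hyF F hF hxF)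

variable (ℱ) in
theorem isClosed_tightFace (x : Fin r → ℝ) : IsClosed (tightFace ℱ x) := by
  simp only [tightFace, SPcomplex, Set.ofPred_and, Set.ofPred_forall]
  refine .inter (.inter ?_ ?_) (.inter ?_ ?_) <;>
    repeat refine isClosed_iInter fun _ => ?_
  all_goals first
    | exact isClosed_le continuous_const (by fun_prop)
    | exact isClosed_eq (by fun_prop) continuous_const

/-- The face lies in the unit cube. -/
theorem isCompact_tightFace {x : Fin r → ℝ}
    (hx : ∀ i, x i ≠ 0 → ∃ F ∈ ℱ, i ∉ F ∧ ∑ j ∈ Fᶜ, x j = 1) : IsCompact (tightFace ℱ x) := by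
  refine (isCompact_Icc (a := 0) (b := 1)).of_isClosed_subset (isClosed_tightFace ℱ x)
    fun y hy => ⟨hy.1.2, fun i => ?_⟩
  by_cases hxi : x i = 0
  · simp [hy.2.2 i hxi]
  obtain ⟨F, hF, hiF, hxF⟩ := hx i hxi
  calc y i ≤ ∑ j ∈ Fᶜ, y j :=
        Finset.single_le_sum (fun j _ => hy.1.2 j) (Finset.mem_compl.2 hiF)
    _ = 1 := hy.2.1 F hF hxF

end SPcomplex

theorem degree_minGen_le_delta_mul_general
    {r : ℕ} (ℱ : Finset (Finset (Fin r)))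
    (δ : ℝ)
    (hδ : IsGreatest {x : ℝ | ∃ v ∈ Set.extremePoints ℝ (SPcomplex ℱ), x = ∑ i, v i} δ)
    (n : ℕ) (hn : 1 ≤ n) (α : Fin r → ℕ) (hα : isMinGenSymbSR ℱ n α) :
    (∑ i, (α i : ℝ)) ≤ δ * n := by
  have hn₀ : (0 : ℝ) < n := by exact_mod_cast hn
  set x : Fin r → ℝ := fun i => (α i : ℝ) / n
  have hcover : ∀ i, x i ≠ 0 → ∃ F ∈ ℱ, i ∉ F ∧ ∑ j ∈ Fᶜ, x j = 1 := fun i hxi => by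
    obtain ⟨F, hF, hiF, hαF⟩ := hα.exists_tight_facet (i := i) fun hαi => hxi (by simp [x, hαi])
    refine ⟨F, hF, hiF, ?_⟩
    rw [← Finset.sum_div, div_eq_one_iff_eq hn₀.ne']
    exact_mod_cast hαF
  obtain ⟨e, he, hxe⟩ := (SPcomplex.isCompact_tightFace hcover).exists_mem_extremePoints_le
    (∑ i, ContinuousLinearMap.proj i) (SPcomplex.self_mem_tightFace (hα.1.div_mem_SPcomplex hn₀))
  have heδ : ∑ i, e i ≤ δ :=
    hδ.2 ⟨e, (SPcomplex.isExtreme_tightFace ℱ x).extremePoints_subset_extremePoints he, rfl⟩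
  simp only [FunLike.coe_sum, Finset.sum_apply, ContinuousLinearMap.proj_apply, x] at hxe
  rw [← Finset.sum_div, div_le_iff₀ hn₀] at hxe
  exact hxe.trans (mul_le_mul_of_nonneg_right heδ hn₀.le)

/-- every minimal monomial generator of `I_Δ^(n)` has degree at most
`δ(I_Δ) · n`, where `δ(I_Δ)` is the maximal coordinate sum of a vertex (extreme
point) of the polyhedron `SP(Δ)`. -/
theorem degree_minGen_le_delta_mul
    {r : ℕ} (ℱ : Finset (Finset (Fin r))) (hℱ : ℱ.Nonempty)
    (hfacets : ∀ F ∈ ℱ, ∀ G ∈ ℱ, F ⊆ G → F = G)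
    (δ : ℝ)
    (hδ : IsGreatest {x : ℝ | ∃ v ∈ Set.extremePoints ℝ (SPcomplex ℱ), x = ∑ i, v i} δ)
    (n : ℕ) (hn : 1 ≤ n) (α : Fin r → ℕ) (hα : isMinGenSymbSR ℱ n α) :
    (∑ i, (α i : ℝ)) ≤ δ * n :=
  degree_minGen_le_delta_mul_general ℱ δ hδ n hn α hα
end

section
/- Let G be a simple graph on [r] with no isolated vertex, and let α ∈ ℝ^r be a vertex of the polyhedron SP(G) = {x ∈ ℝ^r : x_i + x_j ≥ 1 for all edges {i,j} of G, x_i ≥ 0 for all i}. Then every coordinate α_i lies in {0, 1/2, 1}. -/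
/-! The cubic `φ t = t (1 - 2t) (1 - t)` vanishes exactly at `0, 1/2, 1` and satisfies
`φ (1 - t) = -φ t`. Hence moving a point `α` of `SP(G)` in the direction `φ ∘ α` keeps every
tight constraint tight (`α i + α j = 1` forces `φ (α j) = -φ (α i)`, and `α i = 0` forces
`φ (α i) = 0`), while the finitely many slack constraints survive small moves. If `α` is a
vertex, this direction must therefore be zero, i.e. `φ (α i) = 0` for every `i`. -/

/-- The polyhedron `SP(G) = {x ∈ ℝ^V : x i + x j ≥ 1 for all edges ij, x ≥ 0}`. -/
def SPgraph {V : Type*} (G : SimpleGraph V) : Set (V → ℝ) :=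
  {x | (∀ i j, G.Adj i j → 1 ≤ x i + x j) ∧ ∀ i, 0 ≤ x i}

open Filter Topology

theorem Set.eq_zero_of_mem_extremePoints_of_eventually_add_smul_mem {E : Type*}
    [AddCommGroup E] [Module ℝ E] {A : Set E} {x v : E} (hx : x ∈ A.extremePoints ℝ)
    (hv : ∀ᶠ t : ℝ in 𝓝 0, x + t • v ∈ A) : v = 0 := by
  have hneg : ∀ᶠ t : ℝ in 𝓝 0, x + (-t) • v ∈ A :=
    (continuous_neg.tendsto' 0 0 neg_zero).eventually hv
  obtain ⟨t, ht, hplus, hminus⟩ := (hv.and hneg).exists_gt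
  have hmid : x ∈ openSegment ℝ (x + t • v) (x + (-t) • v) :=
    ⟨1/2, 1/2, by norm_num, by norm_num, by norm_num, by module⟩
  simpa [ht.ne'] using hx.2 hplus hminus hmid

theorem eventually_le_add_mul {a b c : ℝ} (h : c < a ∨ (c = a ∧ b = 0)) :
    ∀ᶠ t : ℝ in 𝓝 0, c ≤ a + t * b := by
  rcases h with hlt | ⟨rfl, rfl⟩
  · have : Tendsto (fun t : ℝ => a + t * b) (𝓝 0) (𝓝 a) := by
      simpa using ((continuous_mul_const b).tendsto 0).const_add a
    exact this.eventually (eventually_ge_nhds hlt)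
  · simp

theorem eventually_add_smul_mem_SPgraph {V : Type*} [Finite V] {G : SimpleGraph V}
    {x v : V → ℝ} (hx : x ∈ SPgraph G)
    (hedge : ∀ i j, G.Adj i j → x i + x j = 1 → v i + v j = 0)
    (hzero : ∀ i, x i = 0 → v i = 0) :
    ∀ᶠ t : ℝ in 𝓝 0, x + t • v ∈ SPgraph G := by
  obtain ⟨hxedge, hxnonneg⟩ := hx
  refine (Filter.eventually_all.2 fun i => Filter.eventually_all.2 fun j => ?_).and
    (Filter.eventually_all.2 fun i => ?_)
  · by_cases hij : G.Adj i j
    · have key : ∀ᶠ t : ℝ in 𝓝 0, 1 ≤ (x i + x j) + t * (v i + v j) :=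
        eventually_le_add_mul <| (hxedge i j hij).lt_or_eq.imp_right
          fun h => ⟨h, hedge i j hij h.symm⟩
      filter_upwards [key] with t ht _
      simp only [Pi.add_apply, Pi.smul_apply, smul_eq_mul]
      linarith
    · exact Eventually.of_forall fun _ h => absurd h hij
  · have key : ∀ᶠ t : ℝ in 𝓝 0, 0 ≤ x i + t * v i :=
      eventually_le_add_mul <| (hxnonneg i).lt_or_eq.imp_right fun h => ⟨h, hzero i h.symm⟩
    simpa only [Pi.add_apply, Pi.smul_apply, smul_eq_mul] using key

theorem vertex_SP_coords_mem_general
    {r : ℕ} (G : SimpleGraph (Fin r))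
    (α : Fin r → ℝ) (hα : α ∈ Set.extremePoints ℝ (SPgraph G)) :
    ∀ i, α i = 0 ∨ α i = 1/2 ∨ α i = 1 := by
  set φ : ℝ → ℝ := fun t => t * (1 - 2 * t) * (1 - t)
  have hv : φ ∘ α = 0 := by
    refine Set.eq_zero_of_mem_extremePoints_of_eventually_add_smul_mem hα
      (eventually_add_smul_mem_SPgraph hα.1 (fun i j _ hij => ?_) (fun i hi => ?_))
    · simp only [Function.comp_apply, φ, show α j = 1 - α i by linarith]
      ring
    · simp [φ, hi]
  intro i
  have hi : α i * (1 - 2 * α i) * (1 - α i) = 0 := congrFun hv i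
  rcases mul_eq_zero.1 hi with hi | hi
  · rcases mul_eq_zero.1 hi with hi | hi
    · exact .inl hi
    · exact .inr (.inl (by linarith))
  · exact .inr (.inr (by linarith))

/-- if `G` is a graph on `[r]` with no isolated vertex and `α` is a
vertex (extreme point) of the polyhedron `SP(G)`, then every coordinate of `α`
lies in `{0, 1/2, 1}`. -/
theorem vertex_SP_coords_mem
    {r : ℕ} (G : SimpleGraph (Fin r))
    (hiso : ∀ i, ∃ j, G.Adj i j)
    (α : Fin r → ℝ) (hα : α ∈ Set.extremePoints ℝ (SPgraph G)) :
    ∀ i, α i = 0 ∨ α i = 1/2 ∨ α i = 1 :=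
  vertex_SP_coords_mem_general G α hα
end

section
/- Let G be a simple graph on [r] with no isolated vertex, and let α ∈ ℝ^r be a vertex of SP(G) = {x ∈ ℝ^r : x_i + x_j ≥ 1 for edges {i,j}, x ≥ 0}. Set S_0 = {i : α_i = 0} and S_1 = {i : α_i = 1}. Then S_0 is an independent set of G and S_1 = N(S_0), the set of neighbors of S_0. -/
/-- The (open) neighbourhood of a set of vertices: the vertices outside `S`
adjacent to some vertex of `S`. -/
def nbhdSet {V : Type*} (G : SimpleGraph V) (S : Set V) : Set V :=
  {v | v ∉ S ∧ ∃ u ∈ S, G.Adj u v}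

open Filter Topology

theorem eq_zero_of_mem_extremePoints_of_add_mem_of_sub_mem {E : Type*} [AddCommGroup E]
    [Module ℝ E] {A : Set E} {x w : E} (hx : x ∈ A.extremePoints ℝ) (hadd : x + w ∈ A)
    (hsub : x - w ∈ A) : w = 0 := by
  have hmid : x ∈ openSegment ℝ (x - w) (x + w) := by
    simpa only [midpoint_sub_add] using midpoint_mem_openSegment (𝕜 := ℝ) (x - w) (x + w)
  simpa using hx.2 hsub hadd hmid

theorem SPgraph.add_single_mem {V : Type*} [DecidableEq V] {G : SimpleGraph V} {α : V → ℝ}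
    (hα : α ∈ SPgraph G) {v : V} {c : ℝ} (hv : 0 ≤ α v + c)
    (hadj : ∀ u, G.Adj u v → 1 ≤ α u + (α v + c)) : α + Pi.single v c ∈ SPgraph G := by
  refine ⟨fun i j hij => ?_, fun i => ?_⟩
  · simp only [Pi.add_apply, Pi.single_apply]
    split_ifs with hi hj hj
    · exact absurd (hi.trans hj.symm) hij.ne
    · subst hi; linarith [hadj j hij.symm]
    · subst hj; linarith [hadj i hij]
    · simpa using hα.1 i j hij
  · simp only [Pi.add_apply, Pi.single_apply]
    split_ifs with hi
    · subst hi; exact hv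
    · simpa using hα.2 i

theorem SPgraph.exists_adj_add_eq_one_of_mem_extremePoints {V : Type*} [Finite V]
    {G : SimpleGraph V} {α : V → ℝ} (hα : α ∈ (SPgraph G).extremePoints ℝ) {v : V}
    (hv : 0 < α v) : ∃ u, G.Adj u v ∧ α u + α v = 1 := by
  classical
  by_contra! hslack
  have hgap : ∀ u, G.Adj u v → 0 < α u + α v - 1 := fun u huv =>
    sub_pos.2 ((hα.1.1 u v huv).lt_of_ne (hslack u huv).symm)
  have hsmall : ∀ᶠ ε in 𝓝[>] (0 : ℝ), ε ≤ α v ∧ ∀ u, G.Adj u v → ε ≤ α u + α v - 1 := by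
    have hle : ∀ {a : ℝ}, 0 < a → ∀ᶠ ε in 𝓝[>] (0 : ℝ), ε ≤ a := fun ha =>
      ((eventually_lt_nhds ha).filter_mono nhdsWithin_le_nhds).mono fun _ => le_of_lt
    refine (hle hv).and (eventually_all.2 fun u => ?_)
    by_cases huv : G.Adj u v
    · exact (hle (hgap u huv)).mono fun _ h _ => h
    · exact .of_forall fun _ h => absurd h huv
  obtain ⟨ε, ⟨hεv, hεu⟩, hε⟩ := (hsmall.and self_mem_nhdsWithin).exists
  have hzero : Pi.single v ε = 0 :=
    eq_zero_of_mem_extremePoints_of_add_mem_of_sub_mem hα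
      (SPgraph.add_single_mem hα.1 (by linarith) fun u huv => by linarith [hεu u huv, hα.1.2 u])
      (by
        rw [sub_eq_add_neg, ← Pi.single_neg]
        exact SPgraph.add_single_mem hα.1 (by linarith) fun u huv => by linarith [hεu u huv])
  exact (ne_of_gt hε) (by simpa using congrFun hzero v)

theorem SPgraph.le_one_of_mem_extremePoints {V : Type*} [Finite V] {G : SimpleGraph V}
    {α : V → ℝ} (hα : α ∈ (SPgraph G).extremePoints ℝ) (v : V) : α v ≤ 1 := by
  by_contra! hv
  obtain ⟨u, -, htight⟩ := exists_adj_add_eq_one_of_mem_extremePoints hα (one_pos.trans hv)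
  linarith [hα.1.2 u]

theorem vertex_SP_zero_set_independent_one_set_nbhd_general
    {r : ℕ} (G : SimpleGraph (Fin r))
    (α : Fin r → ℝ) (hα : α ∈ Set.extremePoints ℝ (SPgraph G)) :
    (∀ i, α i = 0 → ∀ j, α j = 0 → ¬ G.Adj i j) ∧
      {i | α i = 1} = nbhdSet G {i | α i = 0} := by
  have hedge := hα.1.1
  refine ⟨fun i hi j hj hij => by linarith [hedge i j hij], ?_⟩
  ext v
  simp only [Set.mem_ofPred_eq, nbhdSet]
  constructor
  · intro hv
    obtain ⟨u, huv, htight⟩ :=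
      SPgraph.exists_adj_add_eq_one_of_mem_extremePoints hα (hv ▸ one_pos)
    exact ⟨by norm_num [hv], u, by linarith, huv⟩
  · rintro ⟨-, u, hu, huv⟩
    linarith [hedge u v huv, SPgraph.le_one_of_mem_extremePoints hα v]

/-- if `α` is a vertex of `SP(G)` (for `G` with no isolated vertex)
with `S₀ = {i : α i = 0}` and `S₁ = {i : α i = 1}`, then `S₀` is an independent
set of `G` and `S₁ = N(S₀)`. -/
theorem vertex_SP_zero_set_independent_one_set_nbhd
    {r : ℕ} (G : SimpleGraph (Fin r))
    (hiso : ∀ i, ∃ j, G.Adj i j)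
    (α : Fin r → ℝ) (hα : α ∈ Set.extremePoints ℝ (SPgraph G)) :
    (∀ i, α i = 0 → ∀ j, α j = 0 → ¬ G.Adj i j) ∧
      {i | α i = 1} = nbhdSet G {i | α i = 0} :=
  vertex_SP_zero_set_independent_one_set_nbhd_general G α hα
end

section
/- Let G be a graph and J = J(G) its cover ideal. Then for every integer s ≥ 1, J^(2s) = (J^(2))^s and J^(2s+1) = J · (J^(2))^s. -/
open MvPolynomial Pointwise

namespace HHTaux

variable {k : Type*} [Field k] {r : ℕ}

/-- exponent vectors of generators of `(x_i, x_j)^n` -/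
def Sset (i j : Fin r) (n : ℕ) : Set (Fin r →₀ ℕ) :=
  {a | ∃ p q, p + q = n ∧ a = Finsupp.single i p + Finsupp.single j q}

lemma Sset_one (i j : Fin r) :
    Sset i j 1 = {Finsupp.single i 1, Finsupp.single j 1} := by
  ext a
  constructor
  · rintro ⟨p, q, hpq, rfl⟩
    rcases p with _ | p
    · obtain rfl : q = 1 := by omega
      right; simp
    · obtain rfl : q = 0 := by omega
      obtain rfl : p = 0 := by omega
      left; simp
  · rintro (rfl | rfl)
    · exact ⟨1, 0, rfl, by simp⟩
    · exact ⟨0, 1, rfl, by simp⟩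

lemma image_Sset_one (i j : Fin r) :
    (fun a => monomial a (1 : k)) '' Sset i j 1 = {X i, X j} := by
  rw [Sset_one]
  simp only [Set.image_insert_eq, Set.image_singleton]
  rfl

lemma Sset_add_one (i j : Fin r) (n : ℕ) :
    Sset i j n + Sset i j 1 = Sset i j (n + 1) := by
  ext a
  constructor
  · rintro ⟨x, ⟨p, q, hpq, rfl⟩, y, hy, rfl⟩
    rw [Sset_one] at hy
    rcases hy with rfl | rfl
    · exact ⟨p + 1, q, by omega, by rw [Finsupp.single_add]; abel⟩
    · exact ⟨p, q + 1, by omega, by rw [Finsupp.single_add]; abel⟩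
  · rintro ⟨p, q, hpq, rfl⟩
    rcases p with _ | p
    · obtain rfl : q = n + 1 := by omega
      refine ⟨Finsupp.single i 0 + Finsupp.single j n, ⟨0, n, by omega, rfl⟩,
        Finsupp.single j 1, ⟨0, 1, rfl, by simp⟩, ?_⟩
      rw [Finsupp.single_add]; abel
    · refine ⟨Finsupp.single i p + Finsupp.single j q, ⟨p, q, by omega, rfl⟩,
        Finsupp.single i 1, ⟨1, 0, rfl, by simp⟩, ?_⟩
      rw [Finsupp.single_add]; abel

lemma span_mon_mul (A B : Set (Fin r →₀ ℕ)) :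
    Ideal.span ((fun a => monomial a (1 : k)) '' A) *
      Ideal.span ((fun a => monomial a (1 : k)) '' B) =
      Ideal.span ((fun a => monomial a (1 : k)) '' (A + B)) := by
  rw [Ideal.span_mul_span']
  congr 1
  ext f
  constructor
  · rintro ⟨_, ⟨x, hx, rfl⟩, _, ⟨y, hy, rfl⟩, rfl⟩
    exact ⟨x + y, ⟨x, hx, y, hy, rfl⟩,
      by show (monomial (x + y)) (1:k) = monomial x 1 * monomial y 1
         rw [monomial_mul, one_mul]⟩
  · rintro ⟨_, ⟨x, hx, y, hy, rfl⟩, rfl⟩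
    exact ⟨monomial x 1, ⟨x, hx, rfl⟩, monomial y 1, ⟨y, hy, rfl⟩,
      by show monomial x (1:k) * monomial y 1 = monomial (x + y) 1
         rw [monomial_mul, one_mul]⟩

lemma span_pair_pow (i j : Fin r) (n : ℕ) :
    (Ideal.span {X i, X j} : Ideal (MvPolynomial (Fin r) k)) ^ n =
      Ideal.span ((fun a => monomial a (1 : k)) '' Sset i j n) := by
  induction n with
  | zero =>
    have h0 : Sset i j 0 = {0} := by
      ext a
      constructor
      · rintro ⟨p, q, hpq, rfl⟩
        obtain rfl : p = 0 := by omega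
        obtain rfl : q = 0 := by omega
        simp
      · rintro rfl
        exact ⟨0, 0, rfl, by simp⟩
    rw [pow_zero, h0]
    have : (fun a => monomial a (1 : k)) '' ({0} : Set (Fin r →₀ ℕ)) = {1} := by
      rw [Set.image_singleton]
      simp
    rw [this, Ideal.span_singleton_one, Ideal.one_eq_top]
  | succ n ih =>
    rw [pow_succ, ih, ← image_Sset_one (k := k) i j, span_mon_mul, Sset_add_one]

/-- the set of `n`-covers of `G` -/
def Cov (G : SimpleGraph (Fin r)) (n : ℕ) : Set (Fin r →₀ ℕ) :=
  {a | ∀ i j, G.Adj i j → n ≤ a i + a j}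

lemma mem_JJ {G : SimpleGraph (Fin r)} {n : ℕ} {a : Fin r →₀ ℕ} (ha : a ∈ Cov G n) :
    monomial a (1 : k) ∈ ⨅ i, ⨅ j, ⨅ _ : G.Adj i j,
      (Ideal.span {X i, X j} : Ideal (MvPolynomial (Fin r) k)) ^ n := by
  classical
  simp only [Ideal.mem_iInf]
  intro i j hij
  rw [span_pair_pow, mem_ideal_span_monomial_image]
  intro xi hxi
  rw [support_monomial, if_neg (one_ne_zero), Finset.mem_singleton] at hxi
  subst xi
  have hne : i ≠ j := hij.ne
  have hcov := ha i j hij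
  refine ⟨Finsupp.single i (min (a i) n) + Finsupp.single j (n - min (a i) n),
    ⟨min (a i) n, n - min (a i) n, by omega, rfl⟩, ?_⟩
  rw [Finsupp.le_def]
  intro x
  simp only [Finsupp.add_apply, Finsupp.single_apply]
  split_ifs with h1 h2 h2
  · exact absurd (h1.trans h2.symm) hne
  · subst h1; omega
  · subst h2; omega
  · omega

lemma JJ_le_span {G : SimpleGraph (Fin r)} (n : ℕ) :
    (⨅ i, ⨅ j, ⨅ _ : G.Adj i j,
      (Ideal.span {X i, X j} : Ideal (MvPolynomial (Fin r) k)) ^ n) ≤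
      Ideal.span ((fun a => monomial a (1 : k)) '' Cov G n) := by
  intro f hf
  simp only [Ideal.mem_iInf] at hf
  have hsupp : ∀ m ∈ f.support, m ∈ Cov G n := by
    intro m hm i j hij
    have h := hf i j hij
    rw [span_pair_pow, mem_ideal_span_monomial_image] at h
    obtain ⟨si, hsi, hle⟩ := h m hm
    obtain ⟨p, q, hpq, rfl⟩ := hsi
    have hi := Finsupp.le_def.1 hle i
    have hj := Finsupp.le_def.1 hle j
    have e1 : p ≤ (Finsupp.single i p + Finsupp.single j q) i := by
      rw [Finsupp.add_apply, Finsupp.single_eq_same]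
      exact Nat.le_add_right _ _
    have e2 : q ≤ (Finsupp.single i p + Finsupp.single j q) j := by
      rw [Finsupp.add_apply, Finsupp.single_eq_same]
      exact Nat.le_add_left _ _
    omega
  rw [f.as_sum]
  refine Ideal.sum_mem _ fun m hm => ?_
  have : (monomial m (coeff m f) : MvPolynomial (Fin r) k) = C (coeff m f) * monomial m 1 := by
    rw [C_mul_monomial, mul_one]
  rw [this]
  exact Ideal.mul_mem_left _ _ (Ideal.subset_span ⟨m, hsupp m hm, rfl⟩)

lemma decomp {G : SimpleGraph (Fin r)} {N : ℕ} (hN : 3 ≤ N) {a : Fin r →₀ ℕ}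
    (ha : a ∈ Cov G N) :
    ∃ b c : Fin r →₀ ℕ, a = b + c ∧ b ∈ Cov G 2 ∧ c ∈ Cov G (N - 2) := by
  classical
  set b : Fin r →₀ ℕ := Finsupp.onFinset a.support
      (fun i => if a i = 0 then 0 else if N ≤ a i then 2 else 1)
      (fun i h => Finsupp.mem_support_iff.2 (fun h0 => by simp [h0] at h)) with hbdef
  have hbA : ∀ x, b x = if a x = 0 then 0 else if N ≤ a x then 2 else 1 := fun x => rfl
  have hble : b ≤ a := Finsupp.le_def.2 (fun x => by rw [hbA]; split_ifs <;> omega)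
  refine ⟨b, a - b, (add_tsub_cancel_of_le hble).symm, ?_, ?_⟩
  · intro i j hij
    have h := ha i j hij
    rw [hbA, hbA]
    split_ifs <;> omega
  · intro i j hij
    have h := ha i j hij
    rw [Finsupp.tsub_apply, Finsupp.tsub_apply, hbA, hbA]
    split_ifs <;> omega

lemma even_mem {G : SimpleGraph (Fin r)} (s : ℕ) :
    ∀ a : Fin r →₀ ℕ, a ∈ Cov G (2 * s + 2) →
      monomial a (1 : k) ∈ (⨅ i, ⨅ j, ⨅ _ : G.Adj i j,
        (Ideal.span {X i, X j} : Ideal (MvPolynomial (Fin r) k)) ^ 2) ^ (s + 1) := by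
  induction s with
  | zero =>
    intro a ha
    rw [pow_one]
    exact mem_JJ (fun i j hij => by have := ha i j hij; omega)
  | succ s ih =>
    intro a ha
    obtain ⟨b, c, rfl, hb, hc⟩ := decomp (N := 2 * (s + 1) + 2) (by omega) ha
    have hc' : c ∈ Cov G (2 * s + 2) := fun i j hij => by have := hc i j hij; omega
    rw [pow_succ']
    have hmul : (monomial (b + c) (1 : k)) = monomial b 1 * monomial c 1 := by
      rw [monomial_mul, one_mul]
    rw [hmul]
    exact Ideal.mul_mem_mul (mem_JJ hb) (ih c hc')

lemma odd_mem {G : SimpleGraph (Fin r)} (s : ℕ) :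
    ∀ a : Fin r →₀ ℕ, a ∈ Cov G (2 * s + 1) →
      monomial a (1 : k) ∈ (⨅ i, ⨅ j, ⨅ _ : G.Adj i j,
          (Ideal.span {X i, X j} : Ideal (MvPolynomial (Fin r) k)) ^ 1) *
        (⨅ i, ⨅ j, ⨅ _ : G.Adj i j,
          (Ideal.span {X i, X j} : Ideal (MvPolynomial (Fin r) k)) ^ 2) ^ s := by
  induction s with
  | zero =>
    intro a ha
    rw [pow_zero, mul_one]
    exact mem_JJ (fun i j hij => by have := ha i j hij; omega)
  | succ s ih =>
    intro a ha
    obtain ⟨b, c, rfl, hb, hc⟩ := decomp (N := 2 * (s + 1) + 1) (by omega) ha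
    have hc' : c ∈ Cov G (2 * s + 1) := fun i j hij => by have := hc i j hij; omega
    rw [pow_succ, ← mul_assoc]
    have hmul : (monomial (b + c) (1 : k)) = monomial c 1 * monomial b 1 := by
      rw [monomial_mul, one_mul, add_comm]
    rw [hmul]
    exact Ideal.mul_mem_mul (ih c hc') (mem_JJ hb)

lemma JJ_le_pow {G : SimpleGraph (Fin r)} {i j : Fin r} (hij : G.Adj i j) (n : ℕ) :
    (⨅ i, ⨅ j, ⨅ _ : G.Adj i j,
      (Ideal.span {X i, X j} : Ideal (MvPolynomial (Fin r) k)) ^ n) ≤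
      (Ideal.span {X i, X j}) ^ n :=
  iInf_le_of_le i (iInf_le_of_le j (iInf_le _ hij))

end HHTaux

open HHTaux in
/-- Herzog–Hibi–Trung: for the cover ideal `J = J(G)` of a graph `G`,
with symbolic powers `J⁽ⁿ⁾ = ⋂_{ij ∈ E(G)} (xᵢ, xⱼ)ⁿ`, one has
`J⁽²ˢ⁾ = (J⁽²⁾)ˢ` and `J⁽²ˢ⁺¹⁾ = J · (J⁽²⁾)ˢ` for every `s ≥ 1`. -/
theorem symbolic_powers_cover_ideal_degree_two
    {k : Type*} [Field k] {r : ℕ} (G : SimpleGraph (Fin r))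
    (J : ℕ → Ideal (MvPolynomial (Fin r) k))
    (hJ : ∀ n, J n = ⨅ i, ⨅ j, ⨅ _ : G.Adj i j,
      (Ideal.span {X i, X j} : Ideal (MvPolynomial (Fin r) k)) ^ n)
    (s : ℕ) (hs : 1 ≤ s) :
    J (2 * s) = (J 2) ^ s ∧ J (2 * s + 1) = J 1 * (J 2) ^ s := by
  obtain ⟨s, rfl⟩ : ∃ t, s = t + 1 := ⟨s - 1, by omega⟩
  constructor
  · rw [hJ, hJ]
    apply le_antisymm
    · refine le_trans (JJ_le_span _) (Ideal.span_le.2 ?_)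
      rintro _ ⟨a, ha, rfl⟩
      exact even_mem s a (fun i j hij => by have := ha i j hij; omega)
    · refine le_iInf fun i => le_iInf fun j => le_iInf fun hij => ?_
      calc (⨅ i, ⨅ j, ⨅ _ : G.Adj i j,
              (Ideal.span {X i, X j} : Ideal (MvPolynomial (Fin r) k)) ^ 2) ^ (s + 1)
          ≤ ((Ideal.span {X i, X j}) ^ 2) ^ (s + 1) :=
            Ideal.pow_right_mono (JJ_le_pow hij 2) _
        _ = (Ideal.span {X i, X j}) ^ (2 * (s + 1)) := by rw [← pow_mul]
  · rw [hJ, hJ, hJ]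
    apply le_antisymm
    · refine le_trans (JJ_le_span _) (Ideal.span_le.2 ?_)
      rintro _ ⟨a, ha, rfl⟩
      exact odd_mem (s + 1) a ha
    · refine le_iInf fun i => le_iInf fun j => le_iInf fun hij => ?_
      calc (⨅ i, ⨅ j, ⨅ _ : G.Adj i j,
              (Ideal.span {X i, X j} : Ideal (MvPolynomial (Fin r) k)) ^ 1) *
            (⨅ i, ⨅ j, ⨅ _ : G.Adj i j,
              (Ideal.span {X i, X j} : Ideal (MvPolynomial (Fin r) k)) ^ 2) ^ (s + 1)
          ≤ (Ideal.span {X i, X j}) ^ 1 * ((Ideal.span {X i, X j}) ^ 2) ^ (s + 1) :=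
            Ideal.mul_mono (JJ_le_pow hij 1) (Ideal.pow_right_mono (JJ_le_pow hij 2) _)
        _ = (Ideal.span {X i, X j}) ^ (2 * (s + 1) + 1) := by
            rw [← pow_mul, pow_one, ← pow_succ']
end

section
/- Let G be a graph on [r] with no isolated vertex and J = J(G). Then for every s ≥ 1, the maximal generating degree satisfies d(J^(2s)) = 2s·δ(J), where δ(J) is the maximum of the coordinate sums of the vertices of SP(G) = {x ∈ ℝ^r : x_i + x_j ≥ 1 for edges {i,j}, x ≥ 0}. -/
/-- Monomial membership in the `n`-th symbolic power of the cover ideal: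
`x^α ∈ J(G)⁽ⁿ⁾ = ⋂_{ij ∈ E(G)} (xᵢ,xⱼ)ⁿ` iff `α i + α j ≥ n` for every edge `ij`. -/
def memSymbCover {V : Type*} (G : SimpleGraph V) (n : ℕ) (α : V → ℕ) : Prop :=
  ∀ i j, G.Adj i j → n ≤ α i + α j

/-- `x^α` is a minimal monomial generator of `J(G)⁽ⁿ⁾`. -/
def isMinGenSymbCover {V : Type*} (G : SimpleGraph V) (n : ℕ) (α : V → ℕ) : Prop :=
  memSymbCover G n α ∧ ∀ β : V → ℕ, β ≤ α → β ≠ α → ¬ memSymbCover G n β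

open Filter Topology

namespace CoverIdeal

variable {V : Type*} {G : SimpleGraph V}

/-- These are the minimal elements of `SP(G)` for the coordinatewise order. -/
def IsTightPoint (G : SimpleGraph V) (x : V → ℝ) : Prop :=
  x ∈ SPgraph G ∧ ∀ i, 0 < x i → ∃ j, G.Adj i j ∧ x i + x j = 1

theorem isMinGenSymbCover_iff {n : ℕ} {α : V → ℕ} :
    isMinGenSymbCover G n α ↔
      memSymbCover G n α ∧ ∀ i, 0 < α i → ∃ j, G.Adj i j ∧ α i + α j = n := by
  classical
  refine ⟨fun ⟨hmem, hmin⟩ => ⟨hmem, fun i hi => ?_⟩, fun ⟨hmem, htight⟩ => ⟨hmem, ?_⟩⟩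
  · by_contra! hslack
    refine hmin (Function.update α i (α i - 1)) (fun k => ?_) (fun h => ?_) fun j k hjk => ?_
    · rcases eq_or_ne k i with rfl | hk
      · simp
      · simp [hk]
    · have := congrFun h i; simp only [Function.update_self] at this; omega
    · have := hmem j k hjk
      simp only [Function.update_apply]
      split_ifs with hj hk hk
      · exact absurd (hj.trans hk.symm) hjk.ne
      · subst hj; have := hslack k hjk; omega
      · subst hk; have := hslack j hjk.symm; omega
      · exact this
  · intro β hle hne hmemβ
    obtain ⟨i, hi⟩ := Function.ne_iff.mp hne
    have hlt : β i < α i := lt_of_le_of_ne (hle i) hi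
    obtain ⟨j, hij, hsum⟩ := htight i (by omega)
    have := hmemβ i j hij
    have : β j ≤ α j := hle j
    omega

theorem isMinGenSymbCover_of_isTightPoint {n : ℕ} {α : V → ℕ} {x : V → ℝ}
    (hαx : ∀ i, (α i : ℝ) = n * x i) (hx : IsTightPoint G x) : isMinGenSymbCover G n α := by
  refine isMinGenSymbCover_iff.2 ⟨fun i j hij => ?_, fun i hi => ?_⟩
  · have : (n : ℝ) * 1 ≤ n * (x i + x j) :=
      mul_le_mul_of_nonneg_left (hx.1.1 i j hij) n.cast_nonneg
    exact_mod_cast (show (n : ℝ) ≤ α i + α j by rw [hαx, hαx]; linarith)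
  · have hxi : 0 < x i :=
      pos_of_mul_pos_right (by rw [← hαx]; exact_mod_cast hi) n.cast_nonneg
    obtain ⟨j, hij, hsum⟩ := hx.2 i hxi
    refine ⟨j, hij, ?_⟩
    exact_mod_cast (show (α i : ℝ) + α j = n by rw [hαx, hαx, ← mul_add, hsum, mul_one])

theorem isTightPoint_of_isMinGenSymbCover {n : ℕ} (hn : 0 < n) {α : V → ℕ} {x : V → ℝ}
    (hαx : ∀ i, (α i : ℝ) = n * x i) (hα : isMinGenSymbCover G n α) : IsTightPoint G x := by
  obtain ⟨hmem, htight⟩ := isMinGenSymbCover_iff.1 hα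
  have hnR : (0 : ℝ) < n := by exact_mod_cast hn
  refine ⟨⟨fun i j hij => ?_, fun i => ?_⟩, fun i hi => ?_⟩
  · have : (n : ℝ) * 1 ≤ n * (x i + x j) := by
      rw [mul_one, mul_add, ← hαx, ← hαx]; exact_mod_cast hmem i j hij
    exact le_of_mul_le_mul_left this hnR
  · exact nonneg_of_mul_nonneg_right (by rw [← hαx]; positivity) hnR
  · obtain ⟨j, hij, hsum⟩ := htight i (by exact_mod_cast (hαx i).symm ▸ mul_pos hnR hi)
    refine ⟨j, hij, mul_left_cancel₀ hnR.ne' ?_⟩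
    rw [mul_add, ← hαx, ← hαx, mul_one]; exact_mod_cast hsum

theorem eventually_add_smul_mem_SPgraph [Finite V] {x d : V → ℝ} (hx : x ∈ SPgraph G)
    (hzero : ∀ i, x i = 0 → d i = 0)
    (htight : ∀ i j, G.Adj i j → x i + x j = 1 → d i + d j = 0) :
    ∀ᶠ t in 𝓝 (0 : ℝ), x + t • d ∈ SPgraph G := by
  have hlim : ∀ i, Tendsto (fun t : ℝ => x i + t * d i) (𝓝 0) (𝓝 (x i)) := fun i => by
    simpa using tendsto_const_nhds.add ((tendsto_id (x := 𝓝 (0 : ℝ))).mul_const (d i))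
  simp only [SPgraph, Set.mem_ofPred_eq, Pi.add_apply, Pi.smul_apply, smul_eq_mul,
    eventually_and, eventually_all]
  refine ⟨fun i j hij => ?_, fun i => ?_⟩
  · rcases (hx.1 i j hij).eq_or_lt with h | h
    · refine Eventually.of_forall fun t => ?_
      have : t * d i + t * d j = 0 := by rw [← mul_add, htight i j hij h.symm, mul_zero]
      linarith
    · exact ((hlim i).add (hlim j)).eventually_const_le h
  · rcases (hx.2 i).eq_or_lt with h | h
    · exact Eventually.of_forall fun t => by simp [hzero i h.symm, ← h]
    · exact (hlim i).eventually_const_le h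

theorem eq_zero_of_mem_extremePoints [Finite V] {x d : V → ℝ}
    (hx : x ∈ (SPgraph G).extremePoints ℝ) (hzero : ∀ i, x i = 0 → d i = 0)
    (htight : ∀ i j, G.Adj i j → x i + x j = 1 → d i + d j = 0) : d = 0 := by
  obtain ⟨ε, hε, hball⟩ :=
    Metric.eventually_nhds_iff.1 (eventually_add_smul_mem_SPgraph hx.1 hzero htight)
  have hε2 : |ε| / 2 < ε := by rw [abs_of_pos hε]; exact half_lt_self hε
  have hplus := hball (y := ε / 2) (by simpa using hε2)
  have hminus : x - (ε / 2) • d ∈ SPgraph G := by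
    simpa [sub_eq_add_neg] using hball (y := -(ε / 2)) (by simpa using hε2)
  have := hx.2 hplus hminus (mem_openSegment_add_sub x ((ε / 2) • d))
  simpa [hε.ne'] using this

theorem exists_adj_add_eq_one_of_mem_extremePoints [Finite V] {x : V → ℝ}
    (hx : x ∈ (SPgraph G).extremePoints ℝ) {i : V} (hi : 0 < x i) :
    ∃ j, G.Adj i j ∧ x i + x j = 1 := by
  classical
  by_contra! hslack
  have hd := eq_zero_of_mem_extremePoints hx (d := Pi.single i 1)
    (fun j hj => Pi.single_eq_of_ne (by rintro rfl; linarith) _) fun j k hjk hsum => ?_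
  · simpa using congrFun hd i
  · rcases eq_or_ne j i with rfl | hj
    · exact absurd hsum (hslack k hjk)
    rcases eq_or_ne k i with rfl | hk
    · exact absurd (by linarith) (hslack j hjk.symm)
    simp [hj, hk]

theorem isTightPoint_of_mem_extremePoints [Finite V] {x : V → ℝ}
    (hx : x ∈ (SPgraph G).extremePoints ℝ) : IsTightPoint G x :=
  ⟨hx.1, fun _ hi => exists_adj_add_eq_one_of_mem_extremePoints hx hi⟩

theorem eq_zero_or_eq_half_or_eq_one_of_mem_extremePoints [Finite V] {x : V → ℝ}
    (hx : x ∈ (SPgraph G).extremePoints ℝ) (i : V) : x i = 0 ∨ x i = 1 / 2 ∨ x i = 1 := by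
  classical
  -- Moving every coordinate outside `{0, 1}` away from `1/2` keeps all tight edges tight.
  have hd := eq_zero_of_mem_extremePoints hx
    (d := fun i => if x i = 0 ∨ x i = 1 then 0 else x i - 1 / 2) (fun j hj => by simp [hj])
    fun j k _ hsum => ?_
  · have := congrFun hd i
    split_ifs at this with h
    · tauto
    · right; left; simpa [sub_eq_zero] using this
  · rw [show x k = 1 - x j by linarith]
    by_cases hj : x j = 0 ∨ x j = 1
    · have hk : 1 - x j = 0 ∨ 1 - x j = 1 := by rcases hj with h | h <;> simp [h]
      rw [if_pos hj, if_pos hk, add_zero]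
    · have hk : ¬(1 - x j = 0 ∨ 1 - x j = 1) := by
        contrapose! hj; rcases hj with h | h <;> [right; left] <;> linarith
      rw [if_neg hj, if_neg hk]; ring

theorem eq_and_eq_of_add_eq_of_le {a b c p q : ℝ} (ha : 0 < a) (hb : 0 < b) (hab : a + b = 1)
    (hp : c ≤ p) (hq : c ≤ q) (h : a * p + b * q = c) : p = c ∧ q = c := by
  have hsum : a * (p - c) + b * (q - c) = 0 := by linear_combination h - c * hab
  obtain ⟨hp', hq'⟩ := (add_eq_zero_iff_of_nonneg (mul_nonneg ha.le (sub_nonneg.2 hp))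
    (mul_nonneg hb.le (sub_nonneg.2 hq))).1 hsum
  exact ⟨by simpa [ha.ne', sub_eq_zero] using hp', by simpa [hb.ne', sub_eq_zero] using hq'⟩

def tightFace (G : SimpleGraph V) (x : V → ℝ) : Set (V → ℝ) :=
  {y ∈ SPgraph G | (∀ i, x i = 0 → y i = 0) ∧
    ∀ i j, G.Adj i j → x i + x j = 1 → y i + y j = 1}

theorem self_mem_tightFace {x : V → ℝ} (hx : x ∈ SPgraph G) : x ∈ tightFace G x :=
  ⟨hx, fun _ h => h, fun _ _ _ h => h⟩

theorem isExtreme_tightFace (x : V → ℝ) : IsExtreme ℝ (SPgraph G) (tightFace G x) := by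
  refine ⟨fun _ hy => hy.1, fun y hy z hz w hw ⟨a, b, ha, hb, hab, hyz⟩ => ⟨hy, ?_, ?_⟩⟩
  · intro i hi
    refine (eq_and_eq_of_add_eq_of_le ha hb hab (hy.2 i) (hz.2 i) ?_).1
    rw [← hw.2.1 i hi, ← hyz]; rfl
  · intro i j hij hsum
    refine (eq_and_eq_of_add_eq_of_le ha hb hab (hy.1 i j hij) (hz.1 i j hij) ?_).1
    rw [← hw.2.2 i j hij hsum, ← hyz]; simp only [Pi.add_apply, Pi.smul_apply, smul_eq_mul]; ring

theorem convex_tightFace (x : V → ℝ) : Convex ℝ (tightFace G x) := by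
  intro y hy z hz a b ha hb hab
  simp only [tightFace, SPgraph, Set.mem_ofPred_eq, Pi.add_apply, Pi.smul_apply,
    smul_eq_mul] at hy hz ⊢
  refine ⟨⟨fun i j hij => ?_, fun i => ?_⟩, fun i hi => ?_, fun i j hij hsum => ?_⟩
  · nlinarith [hy.1.1 i j hij, hz.1.1 i j hij]
  · nlinarith [hy.1.2 i, hz.1.2 i]
  · simp [hy.2.1 i hi, hz.2.1 i hi]
  · linear_combination a * hy.2.2 i j hij hsum + b * hz.2.2 i j hij hsum + hab

theorem isClosed_tightFace (x : V → ℝ) : IsClosed (tightFace G x) := by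
  simp only [tightFace, SPgraph, Set.ofPred_mem_eq, Set.ofPred_and, Set.ofPred_forall]
  repeat' first
    | apply IsClosed.inter
    | refine isClosed_iInter fun _ => ?_
    | exact isClosed_le (by fun_prop) (by fun_prop)
    | exact isClosed_eq (by fun_prop) (by fun_prop)

theorem tightFace_subset_Icc {x : V → ℝ} (hx : IsTightPoint G x) :
    tightFace G x ⊆ Set.Icc 0 1 := by
  intro y ⟨hy, hzero, htight⟩
  refine ⟨hy.2, fun i => show y i ≤ 1 from ?_⟩
  rcases (hx.1.2 i).eq_or_lt with h | h
  · simp [hzero i h.symm]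
  · obtain ⟨j, hij, hsum⟩ := hx.2 i h
    linarith [htight i j hij hsum, hy.2 j]

theorem IsTightPoint.sum_le [Fintype V] {x : V → ℝ} (hx : IsTightPoint G x) {δ : ℝ}
    (hδ : ∀ v ∈ (SPgraph G).extremePoints ℝ, ∑ i, v i ≤ δ) : ∑ i, x i ≤ δ := by
  have hcompact : IsCompact (tightFace G x) :=
    isCompact_Icc.of_isClosed_subset (isClosed_tightFace x) (tightFace_subset_Icc hx)
  have hmem := self_mem_tightFace hx.1
  rw [← closure_convexHull_extremePoints hcompact (convex_tightFace x)] at hmem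
  refine closure_minimal (t := {y : V → ℝ | ∑ i, y i ≤ δ})
    (convexHull_min (fun v hv => ?_) ?_) ?_ hmem
  · exact hδ v ((isExtreme_tightFace x).extremePoints_subset_extremePoints hv)
  · exact convex_halfSpace_le ⟨fun _ _ => Finset.sum_add_distrib, fun c y => by
      simp [Finset.mul_sum]⟩ δ
  · exact isClosed_le (by fun_prop) continuous_const

theorem sum_le_of_isMinGenSymbCover [Fintype V] {δ : ℝ}
    (hδ : ∀ v ∈ (SPgraph G).extremePoints ℝ, ∑ i, v i ≤ δ) {n : ℕ} {α : V → ℕ}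
    (hα : isMinGenSymbCover G n α) : ∑ i, (α i : ℝ) ≤ n * δ := by
  rcases n.eq_zero_or_pos with rfl | hn
  · have hα0 : ∀ i, α i = 0 := fun i => by
      by_contra hi
      obtain ⟨j, -, h⟩ := (isMinGenSymbCover_iff.1 hα).2 i (Nat.pos_of_ne_zero hi)
      omega
    simp [hα0]
  · have hαx : ∀ i, (α i : ℝ) = n * (α i / n) := fun i => by field_simp
    calc ∑ i, (α i : ℝ) = n * ∑ i, (α i / n : ℝ) := by rw [Finset.mul_sum]; simp_rw [← hαx]
      _ ≤ n * δ := by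
        gcongr
        exact (isTightPoint_of_isMinGenSymbCover hn hαx hα).sum_le hδ

theorem exists_isMinGenSymbCover_two_mul [Finite V] {v : V → ℝ}
    (hv : v ∈ (SPgraph G).extremePoints ℝ) (s : ℕ) :
    ∃ α : V → ℕ, isMinGenSymbCover G (2 * s) α ∧ ∀ i, (α i : ℝ) = (2 * s : ℕ) * v i := by
  have hhalf : ∀ i, ∃ k : ℕ, 2 * v i = k := fun i => by
    rcases eq_zero_or_eq_half_or_eq_one_of_mem_extremePoints hv i with h | h | h
    exacts [⟨0, by simp [h]⟩, ⟨1, by simp [h]⟩, ⟨2, by simp [h]⟩]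
  choose k hk using hhalf
  have hαv : ∀ i, ((s * k i : ℕ) : ℝ) = (2 * s : ℕ) * v i := fun i => by
    push_cast; rw [← hk]; ring
  exact ⟨_, isMinGenSymbCover_of_isTightPoint hαv (isTightPoint_of_mem_extremePoints hv), hαv⟩

end CoverIdeal

theorem maxGenDegree_even_symbolic_power_cover_general
    {r : ℕ} (G : SimpleGraph (Fin r))
    (δ : ℝ)
    (hδ : IsGreatest {x : ℝ | ∃ v ∈ Set.extremePoints ℝ (SPgraph G), x = ∑ i, v i} δ)
    (s : ℕ) :
    IsGreatest {x : ℝ | ∃ α : Fin r → ℕ,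
        isMinGenSymbCover G (2 * s) α ∧ x = ∑ i, (α i : ℝ)}
      (2 * s * δ) := by
  obtain ⟨⟨v, hv, rfl⟩, hδub⟩ := hδ
  constructor
  · obtain ⟨α, hα, hαv⟩ := CoverIdeal.exists_isMinGenSymbCover_two_mul hv s
    refine ⟨α, hα, ?_⟩
    simp_rw [hαv, ← Finset.mul_sum]
    push_cast; ring
  · rintro _ ⟨α, hα, rfl⟩
    exact_mod_cast CoverIdeal.sum_le_of_isMinGenSymbCover (fun w hw => hδub ⟨w, hw, rfl⟩) hα

/-- for a graph `G` on `[r]` with no isolated vertex and `J = J(G)`,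
the maximal generating degree of `J⁽²ˢ⁾` equals `2s·δ(J)` for all `s ≥ 1`, where
`δ(J)` is the maximal coordinate sum of a vertex of `SP(G)`. -/
theorem maxGenDegree_even_symbolic_power_cover
    {r : ℕ} (G : SimpleGraph (Fin r))
    (hiso : ∀ i, ∃ j, G.Adj i j)
    (δ : ℝ)
    (hδ : IsGreatest {x : ℝ | ∃ v ∈ Set.extremePoints ℝ (SPgraph G), x = ∑ i, v i} δ)
    (s : ℕ) (hs : 1 ≤ s) :
    IsGreatest {x : ℝ | ∃ α : Fin r → ℕ,
        isMinGenSymbCover G (2 * s) α ∧ x = ∑ i, (α i : ℝ)}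
      (2 * s * δ) :=
  maxGenDegree_even_symbolic_power_cover_general G δ hδ s
end

section
/- Let G be a graph on [r] with no isolated vertex and J = J(G). If δ(J) = r/2, then for all s ≥ 0, d(J^(2s+1)) = 2s·δ(J) + d(J). -/
/-!
For the lower bound, a minimal generator `α` of `J` of degree `d(J)` gives the minimal generator
`α + s` of `J⁽²ˢ⁺¹⁾`: since `G` has no isolated vertex, every vertex stays on a tight edge. Its
degree is `d(J) + r s = d(J) + 2 s δ`.

For the upper bound, induct on `s`. A minimal generator `β` of `J⁽ⁿ⁺²⁾` splits as `β = γ + 2 v`,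
where `γ = min (β - 1, n)` is a minimal generator of `J⁽ⁿ⁾` and `v = (β - γ) / 2 ∈ {0, 1/2, 1}ʳ`
is a point of `SP(G)` whose nonzero coordinates all lie on tight edges. The constraints tight at
`v` cut out a face of `SP(G)` that is compact, so by Krein–Milman the coordinate sum attains its
maximum on it at an extreme point, which is a vertex of `SP(G)`; hence `∑ v ≤ δ`.
-/

open Function Finset

theorem IsCompact.exists_mem_extremePoints_isMaxOn {E : Type*} [AddCommGroup E] [Module ℝ E]
    [TopologicalSpace E] [T2Space E] [IsTopologicalAddGroup E] [ContinuousSMul ℝ E]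
    [LocallyConvexSpace ℝ E] {s : Set E} (hs : IsCompact s) (hne : s.Nonempty)
    (l : StrongDual ℝ E) : ∃ x ∈ s.extremePoints ℝ, IsMaxOn l s x := by
  obtain ⟨z, hzs, hz⟩ := hs.exists_isMaxOn hne l.continuous.continuousOn
  have hexp : IsExposed ℝ s {y ∈ s | ∀ w ∈ s, l w ≤ l y} := fun _ => ⟨l, rfl⟩
  obtain ⟨x, hx⟩ := (hexp.isCompact hs).extremePoints_nonempty ⟨z, hzs, isMaxOn_iff.1 hz⟩
  exact ⟨x, hexp.isExtreme.extremePoints_subset_extremePoints hx, isMaxOn_iff.2 hx.1.2⟩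

variable {V : Type*} {G : SimpleGraph V}

theorem isMinGenSymbCover_iff {n : ℕ} {β : V → ℕ} :
    isMinGenSymbCover G n β ↔
      memSymbCover G n β ∧ ∀ i, 0 < β i → ∃ j, G.Adj i j ∧ β i + β j = n := by
  classical
  refine ⟨fun hβ => ⟨hβ.1, fun i hi => ?_⟩, fun ⟨hmem, htight⟩ => ⟨hmem, ?_⟩⟩
  · have hne : update β i (β i - 1) ≠ β := fun h => by
      have := congrFun h i
      simp only [update_self] at this
      omega
    have hnot := hβ.2 _ (update_le_self_iff.2 (Nat.sub_le _ _)) hne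
    simp only [memSymbCover, not_forall, not_le] at hnot
    obtain ⟨j, k, hjk, hlt⟩ := hnot
    have hsum := hβ.1 j k hjk
    rcases eq_or_ne j i with rfl | hj
    · refine ⟨k, hjk, ?_⟩
      rw [update_self, update_of_ne hjk.ne'] at hlt
      omega
    rcases eq_or_ne k i with rfl | hk
    · refine ⟨j, hjk.symm, ?_⟩
      rw [update_self, update_of_ne hjk.ne] at hlt
      omega
    · rw [update_of_ne hj, update_of_ne hk] at hlt
      omega
  · intro β' hle hne hmem'
    obtain ⟨i, hi⟩ : ∃ i, β' i < β i := by
      by_contra! h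
      exact hne (le_antisymm hle h)
    obtain ⟨j, hij, hsum⟩ := htight i (by omega)
    have := hmem' i j hij
    have : β' j ≤ β j := hle j
    omega

theorem isMinGenSymbCover.le {n : ℕ} {β : V → ℕ} (hβ : isMinGenSymbCover G n β) (i : V) :
    β i ≤ n := by
  rcases Nat.eq_zero_or_pos (β i) with h | h
  · omega
  · obtain ⟨j, -, hsum⟩ := (isMinGenSymbCover_iff.1 hβ).2 i h
    omega

theorem isMinGenSymbCover_add_const (hiso : ∀ i, ∃ j, G.Adj i j) {n : ℕ} {α : V → ℕ}
    (hα : isMinGenSymbCover G n α) (s : ℕ) :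
    isMinGenSymbCover G (n + 2 * s) (fun i => α i + s) := by
  obtain ⟨hmem, htight⟩ := isMinGenSymbCover_iff.1 hα
  refine isMinGenSymbCover_iff.2 ⟨fun i j hij => ?_, fun i _ => ?_⟩
  · have := hmem i j hij
    beta_reduce
    omega
  rcases Nat.eq_zero_or_pos (α i) with h | h
  · obtain ⟨j, hij⟩ := hiso i
    have := hmem i j hij
    have := hα.le j
    exact ⟨j, hij, by omega⟩
  · obtain ⟨j, hij, hsum⟩ := htight i h
    exact ⟨j, hij, by omega⟩

def tightFace (G : SimpleGraph V) (u : V → ℝ) : Set (V → ℝ) :=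
  SPgraph G ∩
    {x | (∀ i, u i = 0 → x i = 0) ∧ ∀ i j, G.Adj i j → u i + u j = 1 → x i + x j = 1}

theorem mem_tightFace_self {u : V → ℝ} (hu : u ∈ SPgraph G) : u ∈ tightFace G u :=
  ⟨hu, fun _ h => h, fun _ _ _ h => h⟩

theorem isExtreme_tightFace (G : SimpleGraph V) (u : V → ℝ) :
    IsExtreme ℝ (SPgraph G) (tightFace G u) := by
  have hbound : ∀ {a b p q c : ℝ}, 0 < a → 0 < b → a + b = 1 → c ≤ p → c ≤ q →
      a * p + b * q = c → p = c := by
    intro a b p q c ha hb hab hp hq h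
    have hsplit : a * (p - c) + b * (q - c) = 0 := by linear_combination h - c * hab
    have : a * (p - c) ≤ 0 := by nlinarith [mul_nonneg hb.le (sub_nonneg.2 hq)]
    exact le_antisymm (by nlinarith) hp
  refine ⟨Set.inter_subset_left, ?_⟩
  rintro x hx y hy _ ⟨-, hz0, hz1⟩ ⟨a, b, ha, hb, hab, rfl⟩
  refine ⟨hx, fun i hi => ?_, fun i j hij hu => ?_⟩
  · have := hz0 i hi
    simp only [Pi.add_apply, Pi.smul_apply, smul_eq_mul] at this
    exact hbound ha hb hab (hx.2 i) (hy.2 i) this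
  · have := hz1 i j hij hu
    simp only [Pi.add_apply, Pi.smul_apply, smul_eq_mul] at this
    exact hbound ha hb hab (hx.1 i j hij) (hy.1 i j hij) (by linarith)

theorem isClosed_tightFace (G : SimpleGraph V) (u : V → ℝ) : IsClosed (tightFace G u) := by
  have hc : ∀ i, Continuous fun x : V → ℝ => x i := continuous_apply
  simp only [tightFace, SPgraph, Set.ofPred_and, Set.ofPred_forall]
  refine ((isClosed_iInter fun i => isClosed_iInter fun j => isClosed_iInter fun _ =>
      isClosed_le continuous_const ((hc i).add (hc j))).inter
    (isClosed_iInter fun i => isClosed_le continuous_const (hc i))).inter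
    ((isClosed_iInter fun i => isClosed_iInter fun _ => isClosed_eq (hc i) continuous_const).inter
    (isClosed_iInter fun i => isClosed_iInter fun j => isClosed_iInter fun _ =>
      isClosed_iInter fun _ => isClosed_eq ((hc i).add (hc j)) continuous_const))

theorem isCompact_tightFace {u : V → ℝ}
    (hcov : ∀ i, u i = 0 ∨ ∃ j, G.Adj i j ∧ u i + u j = 1) : IsCompact (tightFace G u) := by
  refine (isCompact_univ_pi fun _ => isCompact_Icc (a := (0 : ℝ)) (b := 1)).of_isClosed_subset
    (isClosed_tightFace G u) fun x ⟨hx, hx0, hx1⟩ i _ => ⟨hx.2 i, ?_⟩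
  rcases hcov i with h | ⟨j, hij, h⟩
  · exact (hx0 i h).le.trans zero_le_one
  · linarith [hx1 i j hij h, hx.2 j]

theorem exists_mem_extremePoints_sum_le [Fintype V] {u : V → ℝ} (hu : u ∈ SPgraph G)
    (hcov : ∀ i, u i = 0 ∨ ∃ j, G.Adj i j ∧ u i + u j = 1) :
    ∃ w ∈ (SPgraph G).extremePoints ℝ, ∑ i, u i ≤ ∑ i, w i := by
  obtain ⟨w, hw, hmax⟩ := (isCompact_tightFace hcov).exists_mem_extremePoints_isMaxOn
    ⟨u, mem_tightFace_self hu⟩ (∑ i, ContinuousLinearMap.proj i)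
  refine ⟨w, (isExtreme_tightFace G u).extremePoints_subset_extremePoints hw, ?_⟩
  simpa using isMaxOn_iff.1 hmax u (mem_tightFace_self hu)

theorem isMinGenSymbCover_min_sub_one {n : ℕ} {β : V → ℕ}
    (hβ : isMinGenSymbCover G (n + 2) β) :
    isMinGenSymbCover G n (fun i => min (β i - 1) n) := by
  obtain ⟨hmem, htight⟩ := isMinGenSymbCover_iff.1 hβ
  refine isMinGenSymbCover_iff.2 ⟨fun i j hij => ?_, fun i hi => ?_⟩
  · have := hmem i j hij
    beta_reduce
    omega
  · obtain ⟨j, hij, hsum⟩ := htight i (by omega)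
    have := hβ.le j
    exact ⟨j, hij, by omega⟩

theorem exists_isMinGenSymbCover_sum_le [Fintype V] {n : ℕ} {β : V → ℕ}
    (hβ : isMinGenSymbCover G (n + 2) β) :
    ∃ γ : V → ℕ, isMinGenSymbCover G n γ ∧
      ∃ w ∈ (SPgraph G).extremePoints ℝ, ∑ i, (β i : ℝ) ≤ ∑ i, (γ i : ℝ) + 2 * ∑ i, w i := by
  obtain ⟨hmem, htight⟩ := isMinGenSymbCover_iff.1 hβ
  have hle := hβ.le
  obtain ⟨γ, hγdef⟩ : ∃ γ : V → ℕ, ∀ i, γ i = min (β i - 1) n := ⟨_, fun _ => rfl⟩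
  obtain ⟨k, hkdef⟩ : ∃ k : V → ℕ, ∀ i, k i = β i - γ i := ⟨_, fun _ => rfl⟩
  have hγ : isMinGenSymbCover G n γ := by
    simpa only [← funext hγdef] using isMinGenSymbCover_min_sub_one hβ
  have hv : (fun i => (k i : ℝ) / 2) ∈ SPgraph G := by
    refine ⟨fun i j hij => ?_, fun i => by positivity⟩
    have : 2 ≤ k i + k j := by
      have := hmem i j hij
      rw [hkdef, hkdef, hγdef, hγdef]
      omega
    have : (2 : ℝ) ≤ k i + k j := by exact_mod_cast this
    linarith
  have hcov : ∀ i, (k i : ℝ) / 2 = 0 ∨ ∃ j, G.Adj i j ∧ (k i : ℝ) / 2 + k j / 2 = 1 := by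
    intro i
    rcases Nat.eq_zero_or_pos (β i) with h | h
    · left
      simp [hkdef, h]
    · right
      obtain ⟨j, hij, hsum⟩ := htight i h
      have : k i + k j = 2 := by
        have := hle i
        have := hle j
        rw [hkdef, hkdef, hγdef, hγdef]
        omega
      have : (k i : ℝ) + k j = 2 := by exact_mod_cast this
      exact ⟨j, hij, by linarith⟩
  obtain ⟨w, hw, hsum⟩ := exists_mem_extremePoints_sum_le hv hcov
  refine ⟨γ, hγ, w, hw, ?_⟩
  have hβγ : ∀ i, (β i : ℝ) = γ i + 2 * ((k i : ℝ) / 2) := fun i => by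
    rw [mul_div_cancel₀ _ two_ne_zero, hkdef, Nat.cast_sub (by rw [hγdef]; omega),
      add_sub_cancel]
  simp only [hβγ, sum_add_distrib, ← mul_sum] at hsum ⊢
  linarith

/-- for a graph `G` on `[r]` with no isolated vertex and `J = J(G)`,
if `δ(J) = r/2` then `d(J⁽²ˢ⁺¹⁾) = 2s·δ(J) + d(J)` for all `s ≥ 0`. Here
`δ(J)` is the maximal coordinate sum of a vertex of `SP(G)`, and `d(·)` is the
maximal degree of a minimal monomial generator. -/
theorem maxGenDegree_odd_symbolic_power_cover_of_delta_half
    {r : ℕ} (G : SimpleGraph (Fin r))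
    (hiso : ∀ i, ∃ j, G.Adj i j)
    (δ : ℝ)
    (hδ : IsGreatest {x : ℝ | ∃ v ∈ Set.extremePoints ℝ (SPgraph G), x = ∑ i, v i} δ)
    (hδr : δ = r / 2)
    (dJ : ℝ)
    (hdJ : IsGreatest {x : ℝ | ∃ α : Fin r → ℕ,
        isMinGenSymbCover G 1 α ∧ x = ∑ i, (α i : ℝ)} dJ)
    (s : ℕ) :
    IsGreatest {x : ℝ | ∃ α : Fin r → ℕ,
        isMinGenSymbCover G (2 * s + 1) α ∧ x = ∑ i, (α i : ℝ)}
      (2 * s * δ + dJ) := by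
  have hub : ∀ w ∈ (SPgraph G).extremePoints ℝ, ∑ i, w i ≤ δ := fun w hw => hδ.2 ⟨w, hw, rfl⟩
  constructor
  · obtain ⟨α, hα, rfl⟩ := hdJ.1
    refine ⟨fun i => α i + s, by simpa [add_comm] using isMinGenSymbCover_add_const hiso hα s, ?_⟩
    simp only [hδr, Nat.cast_add, sum_add_distrib, sum_const, card_univ, Fintype.card_fin,
      nsmul_eq_mul]
    ring
  · rintro _ ⟨β, hβ, rfl⟩
    induction s generalizing β with
    | zero => simpa using hdJ.2 ⟨β, by simpa using hβ, rfl⟩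
    | succ s ih =>
      obtain ⟨γ, hγ, w, hw, hsum⟩ := exists_isMinGenSymbCover_sum_le (n := 2 * s + 1) hβ
      have := ih γ hγ
      have := hub w hw
      push_cast
      linarith
end

section
/- Let cr(G) be the corona of a graph G on d ≥ 1 vertices (obtained by attaching one pendant vertex to each vertex of G), and let α ∈ ℝ^{2d} be a vertex of the polyhedron SP(cr(G)) = {x : x_i + x_j ≥ 1 for edges {i,j} of cr(G), x ≥ 0}. Then the sum of the coordinates of α equals d. -/
/-- The corona `cr(G)` of a graph `G` on `Fin d`: attach one pendant vertex
`Sum.inr i` to each vertex `Sum.inl i` of `G`. -/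
def corona {d : ℕ} (G : SimpleGraph (Fin d)) : SimpleGraph (Fin d ⊕ Fin d) where
  Adj u v :=
    match u, v with
    | Sum.inl i, Sum.inl j => G.Adj i j
    | Sum.inl i, Sum.inr j => i = j
    | Sum.inr i, Sum.inl j => i = j
    | Sum.inr _, Sum.inr _ => False
  symm := by
    refine ⟨?_⟩
    rintro (i | i) (j | j) h
    · exact G.symm.symm _ _ h
    · exact h.symm
    · exact h.symm
    · exact h.elim
  loopless := by
    refine ⟨?_⟩
    rintro (i | i) h
    · exact G.loopless.irrefl i h
    · exact h

/-
Perturbing a vertex `α` of `SP(G)` by `±ε` in one coordinate shows that every coordinate `u`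
with `α u > 0` lies on a tight edge `α u + α j = 1`. In `cr(G)`, for the pendant edge `{x_i, y_i}`:
if `α y_i > 0`, its only edge is the pendant one, which is therefore tight; if `α y_i = 0`, then
`α x_i ≥ 1`, and a tight edge at `x_i` forces `α x_i ≤ 1`. Hence every pendant edge is tight,
and the `d` pendant edges partition the coordinates.
-/

theorem notMem_extremePoints_of_add_mem_of_sub_mem {𝕜 E : Type*} [Field 𝕜] [LinearOrder 𝕜]
    [IsStrictOrderedRing 𝕜] [AddCommGroup E] [Module 𝕜 E] {A : Set E} {x v : E} (hv : v ≠ 0)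
    (hadd : x + v ∈ A) (hsub : x - v ∈ A) : x ∉ A.extremePoints 𝕜 := fun hx =>
  hv <| add_eq_left.1 <| hx.2 hadd hsub <| by
    simpa only [midpoint_add_sub] using midpoint_mem_openSegment (𝕜 := 𝕜) (x + v) (x - v)

open Topology

namespace SPgraph

variable {V : Type*} {G : SimpleGraph V} {x : V → ℝ}

theorem add_single_mem_s14 [DecidableEq V] (hx : x ∈ SPgraph G) {u : V} {t : ℝ}
    (hu : 0 ≤ x u + t) (hadj : ∀ j, G.Adj u j → 1 ≤ x u + t + x j) :
    x + Pi.single u t ∈ SPgraph G := by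
  refine ⟨fun i j hij => ?_, fun i => ?_⟩
  · simp only [Pi.add_apply, Pi.single_apply]
    by_cases hi : i = u
    · subst hi
      simpa [hij.ne.symm] using hadj j hij
    · by_cases hj : j = u
      · subst hj
        simpa [hi, add_comm] using hadj i hij.symm
      · simpa [hi, hj] using hx.1 i j hij
  · by_cases hi : i = u
    · subst hi
      simpa using hu
    · simpa [Pi.single_apply, hi] using hx.2 i

theorem exists_adj_add_eq_one [Finite V] (hx : x ∈ (SPgraph G).extremePoints ℝ) {u : V}
    (hu : 0 < x u) : ∃ j, G.Adj u j ∧ x u + x j = 1 := by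
  classical
  by_contra! hne
  have hslack : ∀ j, G.Adj u j → 0 < x u + x j - 1 := fun j hj =>
    sub_pos.2 <| (hx.1.1 u j hj).lt_of_ne (hne j hj).symm
  have hsmall : ∀ᶠ ε in 𝓝 (0 : ℝ), ε < x u ∧ ∀ j, G.Adj u j → ε < x u + x j - 1 :=
    (eventually_lt_nhds hu).and <| Filter.eventually_all.2 fun j =>
      Filter.eventually_imp_distrib_left.2 fun hj => eventually_lt_nhds (hslack j hj)
  obtain ⟨ε, ⟨hεu, hεadj⟩, hε⟩ :=
    ((hsmall.filter_mono nhdsWithin_le_nhds).and (self_mem_nhdsWithin (s := Set.Ioi 0))).exists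
  refine notMem_extremePoints_of_add_mem_of_sub_mem (v := Pi.single u ε)
    (Pi.single_ne_zero_iff.2 (ne_of_gt hε)) ?_ ?_ hx
  · exact add_single_mem_s14 hx.1 (by linarith) fun j hj => by linarith [hx.1.1 u j hj]
  · rw [sub_eq_add_neg, ← Pi.single_neg]
    exact add_single_mem_s14 hx.1 (by linarith) fun j hj => by linarith [hεadj j hj]

theorem corona_inl_add_inr_eq_one {d : ℕ} {G : SimpleGraph (Fin d)} {α : Fin d ⊕ Fin d → ℝ}
    (hα : α ∈ (SPgraph (corona G)).extremePoints ℝ) (i : Fin d) :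
    α (.inl i) + α (.inr i) = 1 := by
  have hpendant : 1 ≤ α (.inl i) + α (.inr i) := hα.1.1 _ _ rfl
  rcases (hα.1.2 (.inr i)).eq_or_lt with hzero | hpos
  · obtain ⟨k, -, htight⟩ := exists_adj_add_eq_one hα (u := .inl i) (by linarith)
    linarith [hα.1.2 k]
  · obtain ⟨k | k, hadj, htight⟩ := exists_adj_add_eq_one hα hpos
    · obtain rfl : i = k := hadj
      linarith
    · exact hadj.elim

end SPgraph

theorem vertex_SP_corona_sum_eq_general
    {d : ℕ} (G : SimpleGraph (Fin d))
    (α : (Fin d ⊕ Fin d) → ℝ)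
    (hα : α ∈ Set.extremePoints ℝ (SPgraph (corona G))) :
    ∑ u, α u = (d : ℝ) := by
  rw [Fintype.sum_sum_type, ← Finset.sum_add_distrib]
  simp [SPgraph.corona_inl_add_inr_eq_one hα]

/-- every vertex (extreme point) `α` of the polyhedron
`SP(cr(G))` of the corona of a graph `G` on `d ≥ 1` vertices has coordinate
sum equal to `d`. -/
theorem vertex_SP_corona_sum_eq
    {d : ℕ} (hd : 1 ≤ d) (G : SimpleGraph (Fin d))
    (α : (Fin d ⊕ Fin d) → ℝ)
    (hα : α ∈ Set.extremePoints ℝ (SPgraph (corona G))) :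
    ∑ u, α u = (d : ℝ) :=
  vertex_SP_corona_sum_eq_general G α hα
end

section
/- Let G = cr(K_m, s) for m ≥ 3 and s ≥ 2. Then δ(J(G)) = m(s+1)/2, i.e., for every independent set S of G such that G\N[S] has no bipartite connected component, we have |N(S)| ≤ |S|, with the maximum value of |N(S)| − |S| over such S being 0. -/
/-- The generalized corona `cr(K_m, s)`: the complete graph on `Fin m`
(vertices `Sum.inl i`) with `s` pendant vertices `Sum.inr (i, t)` attached to
each vertex `i` of `K_m`. -/
def coronaK (m s : ℕ) : SimpleGraph (Fin m ⊕ Fin m × Fin s) where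
  Adj u v :=
    match u, v with
    | Sum.inl i, Sum.inl j => i ≠ j
    | Sum.inl i, Sum.inr p => i = p.1
    | Sum.inr p, Sum.inl j => p.1 = j
    | Sum.inr _, Sum.inr _ => False
  symm := by
    constructor
    rintro (i | p) (j | q) h
    · exact h.symm
    · exact h.symm
    · exact h.symm
    · exact h.elim
  loopless := by
    constructor
    rintro (i | p) h
    · exact h rfl
    · exact h

/-- `S` is an independent set of `G`. -/
def indepSet {V : Type*} (G : SimpleGraph V) (S : Set V) : Prop :=
  ∀ u ∈ S, ∀ v ∈ S, ¬ G.Adj u v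

/-- The connected component of `v` in `H` is bipartite (one-vertex components
count as bipartite). -/
def componentBipartite {W : Type*} (H : SimpleGraph W) (v : W) : Prop :=
  ∃ c : W → Bool, ∀ u w, H.Reachable v u → H.Reachable v w → H.Adj u w → c u ≠ c w

/-- The induced subgraph of `G` on the complement of `N[S]` has no bipartite
connected component. -/
def noBipartiteCompOutsideClosedNbhd {V : Type*} (G : SimpleGraph V) (S : Set V) : Prop :=
  ∀ v : ((S ∪ nbhdSet G S)ᶜ : Set V),
    ¬ componentBipartite (G.induce ((S ∪ nbhdSet G S)ᶜ)) v

/-!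
If `S` contains a vertex `i` of `K_m`, independence keeps the other vertices of `K_m` out of `S`,
so each pendant vertex of a `j ≠ i` outside `S` would be an isolated (hence bipartite) component
of `G \ N[S]`; thus all these pendants lie in `S`, and `N(S)` (the other `m - 1` vertices of `K_m`
and the `s` pendants of `i`) is covered by an image of `S`. If `S` contains only pendant vertices,
`N(S)` lies in the image of `S` under "the vertex of `K_m` it hangs on". Equality is attained by
`S = ∅`: then `G \ N[S] = G` is connected and contains a triangle since `m ≥ 3`.
-/

open Sum

lemma nbhdSet_empty {V : Type*} (G : SimpleGraph V) : nbhdSet G ∅ = ∅ := by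
  ext v
  simp [nbhdSet]

lemma componentBipartite_of_forall_not_adj {W : Type*} {H : SimpleGraph W} {v : W}
    (hv : ∀ w, ¬ H.Adj v w) : componentBipartite H v := by
  have hreach : ∀ {u}, H.Reachable v u → u = v := by
    rintro u ⟨_ | ⟨h, _⟩⟩
    exacts [rfl, absurd h (hv _)]
  refine ⟨fun _ => true, fun u w hu hw hadj => ?_⟩
  rw [hreach hu, hreach hw] at hadj
  exact absurd hadj (H.loopless.irrefl v)

lemma not_componentBipartite_of_triangle {W : Type*} {H : SimpleGraph W} {v a b c : W}
    (ha : H.Reachable v a) (hb : H.Reachable v b) (hc : H.Reachable v c)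
    (hab : H.Adj a b) (hbc : H.Adj b c) (hac : H.Adj a c) : ¬ componentBipartite H v := by
  rintro ⟨col, hcol⟩
  have h₁ := hcol _ _ ha hb hab
  have h₂ := hcol _ _ hb hc hbc
  have h₃ := hcol _ _ ha hc hac
  revert h₁ h₂ h₃
  cases col a <;> cases col b <;> cases col c <;> decide

lemma ncard_le_ncard_of_subset_image {α β : Type*} [Finite α] {s : Set α} {t : Set β}
    {f : α → β} (h : t ⊆ f '' s) : t.ncard ≤ s.ncard :=
  (Set.ncard_le_ncard h (Set.toFinite _)).trans (Set.ncard_image_le (Set.toFinite s))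

namespace coronaK

variable {m s : ℕ}

@[simp] lemma adj_inl_inl {i j : Fin m} : (coronaK m s).Adj (inl i) (inl j) ↔ i ≠ j := Iff.rfl

@[simp] lemma adj_inr_inl {p : Fin m × Fin s} {j : Fin m} :
    (coronaK m s).Adj (inr p) (inl j) ↔ p.1 = j := Iff.rfl

@[simp] lemma not_adj_inr_inr {p q : Fin m × Fin s} : ¬ (coronaK m s).Adj (inr p) (inr q) :=
  id

lemma induce_reachable_inl {U : Set (Fin m ⊕ Fin m × Fin s)} (hU : ∀ j, inl j ∈ U)
    (u : U) (k : Fin m) : ((coronaK m s).induce U).Reachable u ⟨inl k, hU k⟩ := by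
  have hhub : ∀ j, ((coronaK m s).induce U).Reachable ⟨inl j, hU j⟩ ⟨inl k, hU k⟩ := by
    intro j
    by_cases hjk : j = k
    · subst hjk; rfl
    · exact SimpleGraph.Adj.reachable (by simpa using hjk)
  obtain ⟨j | ⟨j, t⟩, hu⟩ := u
  · exact hhub j
  · exact (SimpleGraph.Adj.reachable (v := ⟨inl j, hU j⟩) (by simp)).trans (hhub j)

lemma noBipartiteCompOutsideClosedNbhd_empty (hm : 3 ≤ m) :
    noBipartiteCompOutsideClosedNbhd (coronaK m s) ∅ := by
  have hU : ∀ j : Fin m, inl j ∈ ((∅ ∪ nbhdSet (coronaK m s) ∅)ᶜ : Set _) := by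
    simp [nbhdSet_empty]
  intro v
  have hreach := induce_reachable_inl hU v
  exact not_componentBipartite_of_triangle (hreach ⟨0, by omega⟩) (hreach ⟨1, by omega⟩)
    (hreach ⟨2, by omega⟩) (by simp) (by simp) (by simp)

lemma ncard_nbhdSet_le_of_forall_inl_not_mem {S : Set (Fin m ⊕ Fin m × Fin s)}
    (hS : ∀ i, inl i ∉ S) : (nbhdSet (coronaK m s) S).ncard ≤ S.ncard := by
  refine ncard_le_ncard_of_subset_image (f := fun v => inl (Sum.elim id Prod.fst v)) ?_
  rintro v ⟨-, u | p, hu, hadj⟩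
  · exact absurd hu (hS u)
  · rcases v with j | q
    · exact ⟨inr p, hu, by simpa using hadj⟩
    · exact absurd hadj not_adj_inr_inr

lemma inr_mem_of_inl_mem {S : Set (Fin m ⊕ Fin m × Fin s)} (hind : indepSet (coronaK m s) S)
    (hnb : noBipartiteCompOutsideClosedNbhd (coronaK m s) S) {i j : Fin m} (hi : inl i ∈ S)
    (hji : j ≠ i) (t : Fin s) : inr (j, t) ∈ S := by
  by_contra hjt
  have hj : inl j ∉ S := fun hj => hind _ hi _ hj hji.symm
  have hout : inr (j, t) ∈ (S ∪ nbhdSet (coronaK m s) S)ᶜ := by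
    rintro (h | ⟨-, u | p, hu, hadj⟩)
    · exact hjt h
    · obtain rfl : u = j := hadj
      exact hj hu
    · exact not_adj_inr_inr hadj
  refine hnb ⟨_, hout⟩ (componentBipartite_of_forall_not_adj ?_)
  rintro ⟨k | q, hw⟩ hadj
  · obtain rfl : j = k := hadj
    exact hw (Or.inr ⟨hj, inl i, hi, adj_inl_inl.mpr hji.symm⟩)
  · simp at hadj

lemma ncard_nbhdSet_le_of_inl_mem (hm : 2 ≤ m) (hs : 1 ≤ s) {S : Set (Fin m ⊕ Fin m × Fin s)}
    (hind : indepSet (coronaK m s) S) (hnb : noBipartiteCompOutsideClosedNbhd (coronaK m s) S)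
    {i : Fin m} (hi : inl i ∈ S) : (nbhdSet (coronaK m s) S).ncard ≤ S.ncard := by
  have hpend : ∀ j ≠ i, ∀ t, inr (j, t) ∈ S := fun _ hji => inr_mem_of_inl_mem hind hnb hi hji
  obtain ⟨j₀, hj₀⟩ : ∃ j₀ : Fin m, j₀ ≠ i := by
    by_cases h : i.val = 0
    · exact ⟨⟨1, by omega⟩, fun h' => by simp [← h'] at h⟩
    · exact ⟨⟨0, by omega⟩, fun h' => h (by simp [← h'])⟩
  let z : Fin s := ⟨0, hs⟩
  -- the pendants `(j, z)` cover the other hubs, those of `j₀` cover the pendants of `i`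
  let g : Fin m ⊕ Fin m × Fin s → Fin m ⊕ Fin m × Fin s :=
    Sum.elim (fun _ => inr (i, z)) (fun p => if p.2 = z then inl p.1 else inr (i, p.2))
  refine ncard_le_ncard_of_subset_image (f := g) ?_
  rintro (j | ⟨a, t⟩) ⟨hv, -⟩
  · have hji : j ≠ i := fun h => hv (h ▸ hi)
    exact ⟨inr (j, z), hpend j hji z, by simp [g]⟩
  · obtain rfl : a = i := by
      by_contra h
      exact hv (hpend a h t)
    by_cases ht : t = z
    · exact ⟨inl a, hi, by simp [g, ht]⟩
    · exact ⟨inr (j₀, t), hpend j₀ hj₀ t, by simp [g, ht]⟩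

lemma ncard_nbhdSet_le (hm : 2 ≤ m) (hs : 1 ≤ s) {S : Set (Fin m ⊕ Fin m × Fin s)}
    (hind : indepSet (coronaK m s) S) (hnb : noBipartiteCompOutsideClosedNbhd (coronaK m s) S) :
    (nbhdSet (coronaK m s) S).ncard ≤ S.ncard := by
  by_cases h : ∃ i, inl i ∈ S
  · obtain ⟨i, hi⟩ := h
    exact ncard_nbhdSet_le_of_inl_mem hm hs hind hnb hi
  · exact ncard_nbhdSet_le_of_forall_inl_not_mem (not_exists.mp h)

end coronaK

/-- for `G = cr(K_m, s)` with `m ≥ 3`, `s ≥ 2`, one has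
`δ(J(G)) = m(s+1)/2`; i.e. for every independent set `S` of `G` such that
`G \ N[S]` has no bipartite component, `|N(S)| ≤ |S|`, and the maximum of
`|N(S)| − |S|` over such `S` is `0` (attained). -/
theorem delta_coverIdeal_coronaK
    (m s : ℕ) (hm : 3 ≤ m) (hs : 2 ≤ s) :
    IsGreatest {x : ℤ | ∃ S : Set (Fin m ⊕ Fin m × Fin s),
        indepSet (coronaK m s) S ∧ noBipartiteCompOutsideClosedNbhd (coronaK m s) S ∧
        x = ((nbhdSet (coronaK m s) S).ncard : ℤ) - (S.ncard : ℤ)}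
      0 := by
  constructor
  · exact ⟨∅, fun _ h => h.elim, coronaK.noBipartiteCompOutsideClosedNbhd_empty hm,
      by simp [nbhdSet_empty]⟩
  · rintro x ⟨S, hind, hnb, rfl⟩
    have := coronaK.ncard_nbhdSet_le (by omega) (by omega) hind hnb
    omega
end

section
/- Let (R, m) be a standard graded k-algebra, x ∈ m a nonzero linear form, and T a homogeneous ideal of R such that x is a nonzerodivisor on R/T. Then x is a nonzerodivisor on the associated graded module gr_m(T) if and only if m^s T : x = m^{s-1} T for all s ≥ 1. -/
/-!
Since `x ∈ m`, multiplication by `x` maps `m^s T` into `m^(s+1) T`, so `m^(s-1) T ⊆ m^s T : x`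
always holds. The reverse inclusion goes by induction on `s`, starting from `T : x = T`: if
`m^s T : x = m^(s-1) T`, then `m^(s+1) T : x ⊆ m^s T : x = m^(s-1) T`, hence
`m^(s+1) T : x = (m^(s+1) T : x) ∩ m^(s-1) T`, which the regularity of `x` on `gr_m(T)` identifies
with `m^s T`. Conversely, the colon identities make that intersection `m^s T ∩ m^(s-1) T = m^s T`.
-/

namespace Ideal

variable {R : Type*} [CommRing R] {m T : Ideal R} {x : R}

theorem pow_succ_mul_le_pow_mul (m T : Ideal R) (s : ℕ) : m ^ (s + 1) * T ≤ m ^ s * T :=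
  mul_mono_left (pow_le_pow_right s.le_succ)

theorem pow_mul_le_colon_pow_succ_mul (hxm : x ∈ m) (s : ℕ) :
    m ^ s * T ≤ (m ^ (s + 1) * T).colon (span {x}) := fun a ha => by
  rw [mem_colon_span_singleton, mul_comm a, pow_succ', mul_assoc]
  exact mul_mem_mul hxm ha

theorem colon_pow_succ_mul_le_colon_pow_mul (s : ℕ) :
    (m ^ (s + 1) * T).colon (span {x}) ≤ (m ^ s * T).colon (span {x}) :=
  Submodule.colon_mono (pow_succ_mul_le_pow_mul m T s) le_rfl

theorem colon_pow_succ_mul_eq_iff (hxm : x ∈ m) (hreg : T.colon (span {x}) ≤ T) :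
    (∀ s : ℕ, (m ^ (s + 2) * T).colon (span {x}) ⊓ (m ^ s * T) = m ^ (s + 1) * T) ↔
      ∀ s : ℕ, (m ^ (s + 1) * T).colon (span {x}) = m ^ s * T := by
  constructor
  · intro hgr s
    refine le_antisymm ?_ (pow_mul_le_colon_pow_succ_mul hxm s)
    induction s with
    | zero =>
      rw [pow_zero, one_mul]
      exact (colon_pow_succ_mul_le_colon_pow_mul 0).trans (by rwa [pow_zero, one_mul])
    | succ n ih =>
      rw [← hgr n]
      exact le_inf le_rfl ((colon_pow_succ_mul_le_colon_pow_mul (n + 1)).trans ih)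
  · intro hcolon s
    rw [hcolon (s + 1)]
    exact inf_eq_left.mpr (pow_succ_mul_le_pow_mul m T s)

end Ideal

theorem grm_regular_iff_colon_general
    {k R : Type*} [Field k] [CommRing R] [Algebra k R]
    (𝒜 : ℕ → Submodule k R) [GradedAlgebra 𝒜]
    (m : Ideal R) (hm : m = (HomogeneousIdeal.irrelevant 𝒜).toIdeal)
    (x : R) (hx1 : x ∈ 𝒜 1)
    (T : Ideal R)
    (hreg : ∀ a : R, x * a ∈ T → a ∈ T) :
    (∀ s : ℕ,
        (m ^ (s + 2) * T).colon (Ideal.span {x}) ⊓ (m ^ s * T) = m ^ (s + 1) * T) ↔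
      (∀ s : ℕ, 1 ≤ s →
        (m ^ s * T).colon (Ideal.span {x}) = m ^ (s - 1) * T) := by
  have hxm : x ∈ m := hm ▸ HomogeneousIdeal.mem_irrelevant_of_mem 𝒜 one_pos hx1
  have hcolon : T.colon (Ideal.span {x}) ≤ T := fun a ha =>
    hreg a (mul_comm a x ▸ Ideal.mem_colon_span_singleton.mp ha)
  rw [Ideal.colon_pow_succ_mul_eq_iff hxm hcolon]
  constructor
  · intro h s hs
    obtain ⟨t, rfl⟩ := Nat.exists_eq_add_of_le' hs
    simpa using h t
  · intro h s
    simpa using h (s + 1) s.succ_pos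

/-- let `R` be a standard graded `k`-algebra with graded maximal
ideal `m`, `x ∈ m` a nonzero linear form, and `T` a homogeneous ideal such that
`x` is a nonzerodivisor on `R/T` (i.e. `T : x = T`). Then `x` is a
nonzerodivisor on the associated graded module `gr_m(T)` — equivalently
`(m^(s+2)T : x) ∩ m^s T = m^(s+1) T` for all `s ≥ 0` — if and only if
`m^s T : x = m^(s-1) T` for all `s ≥ 1`. -/
theorem grm_regular_iff_colon
    {k R : Type*} [Field k] [CommRing R] [Algebra k R]
    (𝒜 : ℕ → Submodule k R) [GradedAlgebra 𝒜]
    (hstd : ∀ n, 𝒜 (n + 1) = 𝒜 1 * 𝒜 n)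
    (m : Ideal R) (hm : m = (HomogeneousIdeal.irrelevant 𝒜).toIdeal)
    (x : R) (hx1 : x ∈ 𝒜 1) (hx0 : x ≠ 0)
    (T : Ideal R) (hT : T.IsHomogeneous 𝒜)
    (hreg : ∀ a : R, x * a ∈ T → a ∈ T) :
    (∀ s : ℕ,
        (m ^ (s + 2) * T).colon (Ideal.span {x}) ⊓ (m ^ s * T) = m ^ (s + 1) * T) ↔
      (∀ s : ℕ, 1 ≤ s →
        (m ^ s * T).colon (Ideal.span {x}) = m ^ (s - 1) * T) :=
  grm_regular_iff_colon_general 𝒜 m hm x hx1 T hreg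
end

section
/- For m ≥ 3 and s ≥ 2, let G = cr(K_m, s) and J = J(G). Then for all n ≥ 0, d(J^(2n)) = m(s+1)n and d(J^(2n+1)) = m(s+1)n + m + s − 1; consequently, d(J^(n)) = (m+s−1)n + (m−2)(s−1)⌊n/2⌋ for all n, which is not an eventually linear function of n. -/
/-- The maximal generating degree `d(J(cr(K_m,s))⁽ⁿ⁾)` equals `D`. -/
def maxGenDegreeIs (m s n D : ℕ) : Prop :=
  IsGreatest {d : ℕ | ∃ α : (Fin m ⊕ Fin m × Fin s) → ℕ,
      isMinGenSymbCover (coronaK m s) n α ∧ d = ∑ u, α u} D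

open Finset

section SymbolicCover

variable {V : Type*} {G : SimpleGraph V} {n : ℕ} {α : V → ℕ}

/-- Lowering `α w` by one must break some edge inequality, which can only be an edge at `w`. -/
theorem isMinGenSymbCover.exists_adj_add_eq (h : isMinGenSymbCover G n α) {w : V}
    (hw : 0 < α w) : ∃ v, G.Adj w v ∧ α w + α v = n := by
  classical
  by_contra! hslack
  refine h.2 (Function.update α w (α w - 1)) (fun u => ?_) (fun heq => ?_) (fun i j hij => ?_)
  · rcases eq_or_ne u w with rfl | hu
    · simp
    · simp [hu]
  · rw [Function.update_eq_self_iff] at heq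
    omega
  · have hedge := h.1 i j hij
    rcases eq_or_ne i w with rfl | hi
    · have htight := hslack j hij
      simp only [Function.update_self, Function.update_of_ne hij.ne']
      omega
    rcases eq_or_ne j w with rfl | hj
    · have htight := hslack i hij.symm
      simp only [Function.update_self, Function.update_of_ne hij.ne]
      omega
    simpa [Function.update_of_ne hi, Function.update_of_ne hj] using hedge

theorem isMinGenSymbCover.apply_le (h : isMinGenSymbCover G n α) (w : V) : α w ≤ n := by
  rcases Nat.eq_zero_or_pos (α w) with hw | hw
  · omega
  · obtain ⟨v, -, hv⟩ := h.exists_adj_add_eq hw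
    omega

theorem isMinGenSymbCover_of_forall_exists_adj_add_eq (hmem : memSymbCover G n α)
    (htight : ∀ u, ∃ v, G.Adj u v ∧ α u + α v = n) : isMinGenSymbCover G n α := by
  refine ⟨hmem, fun β hle hne hβ => ?_⟩
  obtain ⟨u, hu⟩ : ∃ u, β u < α u := by
    by_contra! h
    exact hne (le_antisymm hle h)
  obtain ⟨v, hadj, hsum⟩ := htight u
  have hβedge := hβ u v hadj
  have hβv : β v ≤ α v := hle v
  omega

end SymbolicCover

theorem le_sum_of_forall_ne_le_add {ι : Type*} [Fintype ι] {a : ι → ℕ} {n : ℕ}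
    (hι : 2 ≤ Fintype.card ι) (h : ∀ i j, i ≠ j → n ≤ a i + a j) :
    Fintype.card ι * (n / 2) + (Fintype.card ι - 1) * (n % 2) ≤ ∑ i, a i := by
  classical
  have : Nonempty ι := Fintype.card_pos_iff.1 (by omega)
  obtain ⟨i₀, hi₀⟩ := Finite.exists_min a
  obtain ⟨c, hc⟩ : ∃ c, Fintype.card ι = c + 2 := ⟨_, (Nat.sub_add_cancel hι).symm⟩
  have hcompl : ({i₀}ᶜ : Finset ι).card = c + 1 := by
    rw [card_compl, card_singleton]
    omega
  rw [Fintype.sum_eq_add_sum_compl i₀, hc, show c + 2 - 1 = c + 1 by omega]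
  have hn := Nat.div_add_mod n 2
  have he := Nat.mod_lt n two_pos
  generalize n / 2 = q at *
  generalize n % 2 = e at *
  subst hn
  by_cases hhalf : 2 * q + e ≤ 2 * a i₀
  · have hrest := card_nsmul_le_sum {i₀}ᶜ a (a i₀) fun j _ => hi₀ j
    rw [hcompl, smul_eq_mul] at hrest
    have hqe : q + e ≤ a i₀ := by omega
    nlinarith [Nat.mul_le_mul_left (c + 2) hqe]
  · have hrest := card_nsmul_le_sum {i₀}ᶜ a (2 * q + e - a i₀) fun j hj => by
      have := h i₀ j (Ne.symm (by simpa using hj))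
      omega
    rw [hcompl, smul_eq_mul] at hrest
    obtain ⟨k, hk⟩ : ∃ k, a i₀ + k = q := ⟨q - a i₀, by omega⟩
    rw [show 2 * q + e - a i₀ = q + e + k by omega] at hrest
    nlinarith [Nat.zero_le (c * k)]

section Corona

variable {m s n : ℕ}

def coronaExtend (s n : ℕ) (a : Fin m → ℕ) : Fin m ⊕ Fin m × Fin s → ℕ :=
  Sum.elim a fun p => n - a p.1

theorem sum_coronaExtend (a : Fin m → ℕ) :
    ∑ u, coronaExtend s n a u = ∑ i, (a i + s * (n - a i)) := by
  simp [coronaExtend, Fintype.sum_sum_type, Fintype.sum_prod_type, sum_add_distrib]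

theorem isMinGenSymbCover.eq_coronaExtend {α : Fin m ⊕ Fin m × Fin s → ℕ}
    (h : isMinGenSymbCover (coronaK m s) n α) : α = coronaExtend s n (α ∘ Sum.inl) := by
  funext u
  rcases u with i | ⟨i, t⟩
  · rfl
  · have hedge := h.1 (Sum.inl i) (Sum.inr (i, t)) rfl
    have hcore := h.apply_le (Sum.inl i)
    rcases Nat.eq_zero_or_pos (α (Sum.inr (i, t))) with h0 | hpos
    · simp only [coronaExtend, Sum.elim_inr, Function.comp_apply]
      omega
    · obtain ⟨v, hadj, hv⟩ := h.exists_adj_add_eq hpos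
      rcases v with j | q
      · obtain rfl : i = j := hadj
        simp only [coronaExtend, Sum.elim_inr, Function.comp_apply]
        omega
      · exact hadj.elim

theorem isMinGenSymbCover_coronaExtend (hs : 1 ≤ s) {a : Fin m → ℕ} (ha : ∀ i, a i ≤ n)
    (hpair : ∀ i j, i ≠ j → n ≤ a i + a j) :
    isMinGenSymbCover (coronaK m s) n (coronaExtend s n a) := by
  refine isMinGenSymbCover_of_forall_exists_adj_add_eq ?_ ?_
  · rintro (i | ⟨i, t⟩) (j | ⟨j, t'⟩) hadj
    · exact hpair i j hadj
    · obtain rfl : i = j := hadj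
      simp only [coronaExtend, Sum.elim_inl, Sum.elim_inr]
      omega
    · obtain rfl : i = j := hadj
      simp only [coronaExtend, Sum.elim_inl, Sum.elim_inr]
      omega
    · exact hadj.elim
  · rintro (i | ⟨i, t⟩)
    · refine ⟨Sum.inr (i, ⟨0, hs⟩), rfl, ?_⟩
      simp only [coronaExtend, Sum.elim_inl, Sum.elim_inr]
      exact Nat.add_sub_of_le (ha i)
    · refine ⟨Sum.inl i, rfl, ?_⟩
      simp only [coronaExtend, Sum.elim_inl, Sum.elim_inr]
      exact Nat.sub_add_cancel (ha i)

/-- Each summand is `s * n - (s - 1) * a i`, so the bound comes from the lower bound on `∑ a`. -/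
theorem sum_coronaExtend_le (hm : 2 ≤ m) (hs : 1 ≤ s) {a : Fin m → ℕ} (ha : ∀ i, a i ≤ n)
    (hpair : ∀ i j, i ≠ j → n ≤ a i + a j) :
    ∑ u, coronaExtend s n a u ≤ m * (s + 1) * (n / 2) + n % 2 * (m + s - 1) := by
  rw [sum_coronaExtend]
  have hS := le_sum_of_forall_ne_le_add (by simpa using hm) hpair
  rw [Fintype.card_fin] at hS
  have hterm : ∀ i, a i + s * (n - a i) + (s - 1) * a i = s * n := fun i => by
    have hcore : (s - 1) * a i + a i = s * a i := by
      rw [← Nat.succ_mul, Nat.succ_eq_add_one, Nat.sub_add_cancel hs]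
    have hpend : s * (n - a i) + s * a i = s * n := by
      rw [← mul_add, Nat.sub_add_cancel (ha i)]
    omega
  have htotal : ∑ i, (a i + s * (n - a i)) + (s - 1) * ∑ i, a i = m * (s * n) := by
    rw [mul_sum, ← sum_add_distrib, sum_congr rfl fun i _ => hterm i, sum_const, card_univ,
      Fintype.card_fin, smul_eq_mul]
  obtain ⟨s', rfl⟩ : ∃ s', s = s' + 1 := ⟨s - 1, by omega⟩
  obtain ⟨m', rfl⟩ : ∃ m', m = m' + 1 := ⟨m - 1, by omega⟩
  have hsS := Nat.mul_le_mul_left s' hS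
  simp only [Nat.add_sub_cancel] at htotal hsS ⊢
  rw [show m' + 1 + (s' + 1) - 1 = m' + s' + 1 by omega]
  have hn := Nat.div_add_mod n 2
  generalize n / 2 = q at *
  generalize n % 2 = e at *
  subst hn
  nlinarith

def coronaExtremalCore (i₀ : Fin m) (n : ℕ) (i : Fin m) : ℕ :=
  if i = i₀ then n / 2 else n - n / 2

theorem sum_coronaExtend_coronaExtremalCore (i₀ : Fin m) :
    ∑ u, coronaExtend s n (coronaExtremalCore i₀ n) u
      = m * (s + 1) * (n / 2) + n % 2 * (m + s - 1) := by
  rw [sum_coronaExtend]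
  have hcompl : ({i₀}ᶜ : Finset (Fin m)).card = m - 1 := by
    rw [card_compl, card_singleton, Fintype.card_fin]
  rw [Fintype.sum_eq_add_sum_compl i₀, sum_congr rfl fun i hi => by
      rw [coronaExtremalCore, if_neg (by simpa using hi)], sum_const, hcompl, smul_eq_mul]
  obtain ⟨m', rfl⟩ : ∃ m', m = m' + 1 := ⟨m - 1, by have := i₀.isLt; omega⟩
  simp only [coronaExtremalCore, if_pos, Nat.add_sub_cancel]
  rw [show n - n / 2 = n / 2 + n % 2 by omega, show n - (n / 2 + n % 2) = n / 2 by omega,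
    show m' + 1 + s - 1 = m' + s by omega]
  ring

theorem maxGenDegreeIs_coronaK (hm : 2 ≤ m) (hs : 1 ≤ s) (n : ℕ) :
    maxGenDegreeIs m s n (m * (s + 1) * (n / 2) + n % 2 * (m + s - 1)) := by
  let i₀ : Fin m := ⟨0, by omega⟩
  constructor
  · refine ⟨coronaExtend s n (coronaExtremalCore i₀ n), ?_, ?_⟩
    · refine isMinGenSymbCover_coronaExtend hs (fun i => ?_) fun i j hij => ?_
      · unfold coronaExtremalCore; split_ifs <;> omega
      · unfold coronaExtremalCore
        split_ifs with hi hj hj <;> first | exact absurd (hi.trans hj.symm) hij | omega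
    · rw [sum_coronaExtend_coronaExtremalCore]
  · rintro d ⟨α, hα, rfl⟩
    rw [hα.eq_coronaExtend]
    exact sum_coronaExtend_le hm hs (fun i => hα.apply_le _) fun i j hij => hα.1 _ _ hij

end Corona

/-- An eventually affine sequence has vanishing second differences, whereas the second
difference of `n ↦ c * ⌊n/2⌋` at an even point is `c`. -/
theorem not_eventually_affine_add_mul_div_two {d c : ℕ} (hc : 0 < c) :
    ¬ ∃ (a b : ℚ) (N : ℕ), ∀ n : ℕ, N ≤ n → ((d * n + c * (n / 2) : ℕ) : ℚ) = a * n + b := by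
  rintro ⟨a, b, N, hlin⟩
  have h₀ := hlin (2 * N) (by omega)
  have h₁ := hlin (2 * N + 1) (by omega)
  have h₂ := hlin (2 * N + 2) (by omega)
  rw [show 2 * N / 2 = N by omega] at h₀
  rw [show (2 * N + 1) / 2 = N by omega] at h₁
  rw [show (2 * N + 2) / 2 = N + 1 by omega] at h₂
  push_cast at h₀ h₁ h₂
  have : (0 : ℚ) < c := by exact_mod_cast hc
  linarith

/-- for `m ≥ 3`, `s ≥ 2` and `J = J(cr(K_m,s))`:
`d(J⁽²ⁿ⁾) = m(s+1)n`, `d(J⁽²ⁿ⁺¹⁾) = m(s+1)n + m + s − 1` for all `n ≥ 0`;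
consequently `d(J⁽ⁿ⁾) = (m+s−1)n + (m−2)(s−1)⌊n/2⌋` for all `n`, which is
not an eventually linear function of `n`. -/
theorem maxGenDegree_symbolic_powers_coronaK
    (m s : ℕ) (hm : 3 ≤ m) (hs : 2 ≤ s) :
    (∀ n : ℕ, maxGenDegreeIs m s (2 * n) (m * (s + 1) * n)) ∧
    (∀ n : ℕ, maxGenDegreeIs m s (2 * n + 1) (m * (s + 1) * n + m + s - 1)) ∧
    (∀ n : ℕ, maxGenDegreeIs m s n ((m + s - 1) * n + (m - 2) * (s - 1) * (n / 2))) ∧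
    ¬ ∃ (a b : ℚ) (N : ℕ), ∀ n : ℕ, N ≤ n →
        (((m + s - 1) * n + (m - 2) * (s - 1) * (n / 2) : ℕ) : ℚ) = a * n + b := by
  have key := maxGenDegreeIs_coronaK (m := m) (s := s) (by omega) (by omega)
  refine ⟨fun n => ?_, fun n => ?_, fun n => ?_, not_eventually_affine_add_mul_div_two ?_⟩
  · simpa [show 2 * n / 2 = n by omega] using key (2 * n)
  · convert key (2 * n + 1) using 1
    rw [show (2 * n + 1) / 2 = n by omega, show (2 * n + 1) % 2 = 1 by omega]
    omega
  · convert key n using 1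
    obtain ⟨m', rfl⟩ : ∃ m', m = m' + 2 := ⟨m - 2, by omega⟩
    obtain ⟨s', rfl⟩ : ∃ s', s = s' + 1 := ⟨s - 1, by omega⟩
    rw [show m' + 2 + (s' + 1) - 1 = m' + s' + 2 by omega, Nat.add_sub_cancel,
      Nat.add_sub_cancel]
    nlinarith [Nat.div_add_mod n 2]
  · exact Nat.mul_pos (by omega) (by omega)
end
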